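/- arXiv:math/0509127 — 4 statements merged into one kernel-verified Lean document; each statement's English description precedes it below -/
import Mathlib

section
/- Switching lemma (Poisson version). Let G=(V,E) be a finite graph without loops and λ ≥ 0. Let M=(M_e : e∈E) and M'=(M'_e : e∈E) be two independent families of independent Poisson random variables, each with mean λ. Let x,y ∈ V be distinct, A ⊆ V, and let s ∈ ℕ^E be such that x ↔ y in s. Then P(∂M = {x,y}, ∂M' = A, M + M' = s) = P(∂M = ∅, ∂M' = A △ {x,y}, M + M' = s), where M + M' is the componentwise sum and △ denotes symmetric difference. -/
open scoped BigOperators symmDiff Classical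

noncomputable section FlowsAndFerromagnets

/-- The number of non-zero mod-`q` flows on the (multi)graph with vertex type `V`,
edge-index type `ι`, and a fixed orientation in which edge `i` leaves `s i` and
arrives at `t i`.  A mod-`q` flow assigns a value of `ZMod q` to every oriented edge
so that, at every vertex, the total flow leaving equals the total flow arriving
(mod `q`); it is non-zero if no edge carries the value `0`. -/
def flowCount (V : Type) [Fintype V] [DecidableEq V] {ι : Type} [Fintype ι]
    (s t : ι → V) (q : ℕ) : ℕ :=
  Nat.card {f : ι → ZMod q //
    (∀ i, f i ≠ 0) ∧
    ∀ v : V, (∑ i, if s i = v then f i else 0) = (∑ i, if t i = v then f i else 0)}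

/-- `C(G_m; q)`: the number of non-zero mod-`q` flows on the multigraph `G_m`
obtained from `G` (edges indexed by `E`, with endpoints `s e`, `t e`) by replacing
each edge `e` by `m e` parallel copies. -/
def flowCountM {V E : Type} [Fintype V] [DecidableEq V] [Fintype E]
    (s t : E → V) (m : E → ℕ) (q : ℕ) : ℕ :=
  flowCount V (fun x : Σ e : E, Fin (m e) => s x.1) (fun x : Σ e : E, Fin (m e) => t x.1) q

/-- `C(G_m^{x,y}; q)`: the number of non-zero mod-`q` flows on the multigraph `G_m`
augmented by one extra edge joining `x` and `y`. -/
def flowCountMxy {V E : Type} [Fintype V] [DecidableEq V] [Fintype E]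
    (s t : E → V) (m : E → ℕ) (x y : V) (q : ℕ) : ℕ :=
  flowCount V
    (fun o : Option (Σ e : E, Fin (m e)) => o.elim x (fun z => s z.1))
    (fun o : Option (Σ e : E, Fin (m e)) => o.elim y (fun z => t z.1)) q

/-- The Poisson weight `∏_e e^{-λ_e} λ_e^{m_e} / m_e!` of a vector of edge multiplicities. -/
def poissonWt {E : Type} [Fintype E] (lam : E → ℝ) (m : E → ℕ) : ℝ :=
  ∏ e, Real.exp (-lam e) * lam e ^ (m e) / (Nat.factorial (m e))

/-- Expectation `E_λ(f(P))` with respect to independent Poisson multiplicities `P e`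
of mean `lam e`. -/
def poissonExp {E : Type} [Fintype E] (lam : E → ℝ) (f : (E → ℕ) → ℝ) : ℝ :=
  ∑' m : E → ℕ, poissonWt lam m * f m

/-- Probability `P_λ(P ∈ A)` with respect to independent Poisson multiplicities. -/
def poissonProb {E : Type} [Fintype E] (lam : E → ℝ) (A : (E → ℕ) → Prop) : ℝ :=
  ∑' m : E → ℕ, poissonWt lam m * (if A m then 1 else 0)

/-- Probability of an event for two independent families of independent Poisson
multiplicities. -/
def poissonProb2 {E : Type} [Fintype E] (lam : E → ℝ)
    (A : (E → ℕ) → (E → ℕ) → Prop) : ℝ :=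
  ∑' m : E → ℕ, ∑' m' : E → ℕ,
    poissonWt lam m * poissonWt lam m' * (if A m m' then 1 else 0)

/-- The (unnormalised) Potts weight `exp(∑_e β J_e (q δ_e(σ) - 1))` of a spin
configuration `σ`. -/
def pottsWt {V E : Type} [Fintype E] (s t : E → V) (q : ℕ) (β : ℝ) (J : E → ℝ)
    (σ : V → Fin q) : ℝ :=
  Real.exp (∑ e, β * J e * ((q : ℝ) * (if σ (s e) = σ (t e) then 1 else 0) - 1))

/-- The Potts partition function `Z_P`. -/
def pottsZ (V : Type) {E : Type} [Fintype V] [DecidableEq V] [Fintype E]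
    (s t : E → V) (q : ℕ) (β : ℝ) (J : E → ℝ) : ℝ :=
  ∑ σ : V → Fin q, pottsWt s t q β J σ

/-- The Potts two-point function `σ(x,y) = ∑_σ (q δ_{σ_x,σ_y} - 1) π(σ)`. -/
def pottsTwoPoint {V E : Type} [Fintype V] [DecidableEq V] [Fintype E]
    (s t : E → V) (q : ℕ) (β : ℝ) (J : E → ℝ) (x y : V) : ℝ :=
  (∑ σ : V → Fin q, ((q : ℝ) * (if σ x = σ y then 1 else 0) - 1) * pottsWt s t q β J σ)
    / pottsZ V s t q β J

/-- The degree of the vertex `v` in the multigraph `G_m`. -/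
def mDeg {V E : Type} [Fintype E] [DecidableEq V] (s t : E → V) (m : E → ℕ) (v : V) : ℕ :=
  ∑ e, m e * ((if s e = v then 1 else 0) + (if t e = v then 1 else 0))

/-- The multigraph `G_m` is even: every vertex has even degree. -/
def IsEvenM {V E : Type} [Fintype E] [DecidableEq V] (s t : E → V) (m : E → ℕ) : Prop :=
  ∀ v : V, Even (mDeg s t m v)

/-- The multigraph `G_m^{x,y}` (with one extra edge joining `x` and `y`) is even. -/
def IsEvenMxy {V E : Type} [Fintype E] [DecidableEq V] (s t : E → V) (m : E → ℕ)
    (x y : V) : Prop :=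
  ∀ v : V, Even (mDeg s t m v + (if v = x then 1 else 0) + (if v = y then 1 else 0))

/-- The source set `∂m` of a vector of multiplicities: the set of vertices of odd
degree in `G_m`. -/
def sources {V E : Type} [Fintype E] [DecidableEq V] (s t : E → V) (m : E → ℕ) : Set V :=
  {v : V | Odd (mDeg s t m v)}

/-- The simple graph on `V` induced by the edges `e` satisfying `pred e`. -/
def openGraph {V E : Type} (s t : E → V) (pred : E → Prop) : SimpleGraph V :=
  SimpleGraph.fromRel (fun a b => ∃ e, pred e ∧ s e = a ∧ t e = b)

/-- `x ↔ y in m`: `x` and `y` lie in the same component of `(V, {e : m e ≥ 1})`. -/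
def ConnectedIn {V E : Type} (s t : E → V) (m : E → ℕ) (x y : V) : Prop :=
  (openGraph s t fun e => m e ≠ 0).Reachable x y

/-- `x ↔ y` in the percolation configuration `ω`. -/
def ConnectedInB {V E : Type} (s t : E → V) (ω : E → Bool) (x y : V) : Prop :=
  (openGraph s t fun e => ω e = true).Reachable x y

/-- The number of connected components of the graph `(V, {e : pred e})`
(isolated vertices count). -/
def numComp {V E : Type} [Fintype V] (s t : E → V) (pred : E → Prop) : ℕ :=
  Nat.card (openGraph s t pred).ConnectedComponent

/-- Product (percolation) weight of a configuration, with edge densities `p`. -/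
def percWt {E : Type} [Fintype E] (p : E → ℝ) (ω : E → Bool) : ℝ :=
  ∏ e, if ω e then p e else 1 - p e

/-- Random-cluster weight of the configuration `ω`. -/
def rcWt {V E : Type} [Fintype V] [Fintype E] (s t : E → V) (p : E → ℝ) (q : ℝ)
    (ω : E → Bool) : ℝ :=
  percWt p ω * q ^ numComp s t (fun e => ω e = true)

/-- Random-cluster probability `φ_{p,q}(A)` of an event `A`. -/
def rcProb {V E : Type} [Fintype V] [Fintype E] (s t : E → V) (p : E → ℝ) (q : ℝ)
    (A : (E → Bool) → Prop) : ℝ :=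
  (∑ ω : E → Bool, if A ω then rcWt s t p q ω else 0) / (∑ ω : E → Bool, rcWt s t p q ω)

/-- The Whitney rank-generating function `W(u,v) = ∑_{F' ⊆ F} u^{r(F')} v^{c(F')}`
of the multigraph with vertex type `V` and edge-index type `ι`, where
`r(F') = |V| - k(F')` and `c(F') = |F'| - |V| + k(F')`. -/
def whitney (V : Type) [Fintype V] {ι : Type} [Fintype ι] (s t : ι → V) (u v : ℝ) : ℝ :=
  ∑ F : Finset ι,
    u ^ (Fintype.card V - numComp s t (· ∈ F)) *
      v ^ (F.card - (Fintype.card V - numComp s t (· ∈ F)))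

/-- `F_q(G_m) = (-1)^{|edges| + |V| - 1} W_{G_m}(-1, -q)`, a real-`q` version of the
flow polynomial of the multigraph `G_m`. -/
def flowPolyW {V E : Type} [Fintype V] [Fintype E] (s t : E → V) (q : ℝ) (m : E → ℕ) : ℝ :=
  (-1 : ℝ) ^ ((∑ e, m e) + Fintype.card V - 1) *
    whitney V (fun x : Σ e : E, Fin (m e) => s x.1) (fun x : Σ e : E, Fin (m e) => t x.1)
      (-1) (-q)

/-- `F_q(G_m^{x,y})`: as `flowPolyW`, for the multigraph `G_m` with one extra edge
joining `x` and `y`. -/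
def flowPolyWxy {V E : Type} [Fintype V] [Fintype E] (s t : E → V) (q : ℝ) (m : E → ℕ)
    (x y : V) : ℝ :=
  (-1 : ℝ) ^ (((∑ e, m e) + 1) + Fintype.card V - 1) *
    whitney V (fun o : Option (Σ e : E, Fin (m e)) => o.elim x (fun z => s z.1))
      (fun o : Option (Σ e : E, Fin (m e)) => o.elim y (fun z => t z.1)) (-1) (-q)

end FlowsAndFerromagnets

/-! The joint weight of `(m, n - m)` factorises over the edges and `∂(n - m) = ∂n ∆ ∂m`, so both
sides reduce to sums over `m ≤ n` with prescribed `∂m`. Grouped by the parity pattern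
`σ ∈ (ZMod 2)^E` of `m`, such a sum factorises into per-edge sums over the `k ≤ n e` of parity `σ e`.
Since `λ^k/k! · λ^(N-k)/(N-k)!` is proportional to `N.choose k`, the even and odd parts agree
whenever `N ≠ 0`. Translating `σ` by the edge indicator `τ` of a path from `x` to `y` inside the
support of `n` therefore preserves the weight and toggles `∂` by `{x} ∆ {y}`. -/

open Finset

theorem Set.singleton_symmDiff_singleton {α : Type} {a b : α} (h : a ≠ b) :
    ({a} ∆ {b} : Set α) = {a, b} := by
  ext v
  simp only [Set.mem_symmDiff, Set.mem_singleton_iff, Set.mem_insert_iff]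
  grind

section SourceSets

variable {V E : Type} [Fintype E] [DecidableEq V]

def sourcesMod2 (s t : E → V) (σ : E → ZMod 2) : Set V :=
  {v | ∑ e, σ e * ((if s e = v then 1 else 0) + (if t e = v then 1 else 0)) = 1}

theorem ZMod.two_add_eq_one_iff (a b : ZMod 2) :
    a + b = 1 ↔ (a = 1 ∧ b ≠ 1 ∨ b = 1 ∧ a ≠ 1) := by
  decide +revert

theorem sourcesMod2_add (s t : E → V) (σ τ : E → ZMod 2) :
    sourcesMod2 s t (σ + τ) = sourcesMod2 s t σ ∆ sourcesMod2 s t τ := by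
  ext v
  simp only [sourcesMod2, Set.mem_ofPred_eq, Set.mem_symmDiff, Pi.add_apply, add_mul,
    sum_add_distrib]
  exact ZMod.two_add_eq_one_iff _ _

theorem sourcesMod2_single (s t : E → V) (e : E) :
    sourcesMod2 s t (Pi.single e 1) = {s e} ∆ {t e} := by
  ext v
  simp only [sourcesMod2, Set.mem_ofPred_eq, Pi.single_apply, ite_mul, one_mul, zero_mul,
    sum_ite_eq', mem_univ, if_true, Set.mem_symmDiff, Set.mem_singleton_iff]
  split_ifs <;> grind

theorem sources_eq_sourcesMod2 (s t : E → V) (m : E → ℕ) :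
    sources s t m = sourcesMod2 s t (fun e => (m e : ZMod 2)) := by
  ext v
  simp only [sources, sourcesMod2, mDeg, Set.mem_ofPred_eq, ← ZMod.natCast_eq_one_iff_odd]
  push_cast
  rfl

theorem sources_add (s t : E → V) (m m' : E → ℕ) :
    sources s t (m + m') = sources s t m ∆ sources s t m' := by
  simp only [sources_eq_sourcesMod2, ← sourcesMod2_add]
  congr 1
  funext e
  simp

theorem sources_sub {s t : E → V} {m n : E → ℕ} (h : m ≤ n) :
    sources s t (n - m) = sources s t n ∆ sources s t m := by
  rw [← symmDiff_symmDiff_cancel_right (sources s t m) (sources s t (n - m)), ← sources_add,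
    tsub_add_cancel_of_le h]

theorem exists_sourcesMod2_eq_of_reachable {s t : E → V} {P : E → Prop} {x y : V}
    (h : (openGraph s t P).Reachable x y) :
    ∃ τ : E → ZMod 2, (∀ e, τ e ≠ 0 → P e) ∧ sourcesMod2 s t τ = {x} ∆ {y} := by
  obtain ⟨w⟩ := h
  induction w with
  | nil => exact ⟨0, by simp, by ext; simp [sourcesMod2]⟩
  | @cons a b c hadj _ ih =>
    obtain ⟨τ, hτP, hτ⟩ := ih
    obtain ⟨e, hPe, hst⟩ : ∃ e, P e ∧ {s e} ∆ {t e} = ({a} ∆ {b} : Set V) := by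
      rw [openGraph, SimpleGraph.fromRel_adj] at hadj
      rcases hadj.2 with ⟨e, hPe, rfl, rfl⟩ | ⟨e, hPe, rfl, rfl⟩
      exacts [⟨e, hPe, rfl⟩, ⟨e, hPe, symmDiff_comm _ _⟩]
    refine ⟨Pi.single e 1 + τ, fun e' he' => ?_, ?_⟩
    · by_cases hee : e' = e
      · exact hee ▸ hPe
      · exact hτP e' (by simpa [hee] using he')
    · rw [sourcesMod2_add, sourcesMod2_single, hst, hτ, symmDiff_assoc,
        symmDiff_symmDiff_cancel_left]

end SourceSets

section ParityParts

variable {R : Type} [CommSemiring R]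

noncomputable def parityPart (f : ℕ → R) (N : ℕ) (b : ZMod 2) : R :=
  ∑ k ∈ Iic N with ((k : ℕ) : ZMod 2) = b, f k

theorem parityPart_add_one {f : ℕ → R} {N : ℕ}
    (h : parityPart f N 0 = parityPart f N 1) (b : ZMod 2) :
    parityPart f N (b + 1) = parityPart f N b := by
  fin_cases b
  exacts [h.symm, h]

variable {E : Type} [Fintype E]

theorem sum_prod_filter_parity_eq (f : E → ℕ → R) (n : E → ℕ) (σ : E → ZMod 2) :
    ∑ m ∈ Iic n with (fun e => (m e : ZMod 2)) = σ, ∏ e, f e (m e)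
      = ∏ e, parityPart (f e) (n e) (σ e) := by
  simp only [parityPart]
  rw [prod_univ_sum]
  congr 1
  ext m
  simp [Fintype.mem_piFinset, funext_iff, forall_and, Pi.le_def]

end ParityParts

section Switching

variable {V E R : Type} [Fintype E] [DecidableEq V] [CommSemiring R]

theorem sum_filter_sources_eq (s t : E → V) (f : E → ℕ → R) (n : E → ℕ) (X : Set V) :
    ∑ m ∈ Iic n with sources s t m = X, ∏ e, f e (m e)
      = ∑ σ with sourcesMod2 s t σ = X, ∏ e, parityPart (f e) (n e) (σ e) := by
  rw [← sum_fiberwise _ (fun m e => (m e : ZMod 2)), sum_filter]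
  refine sum_congr rfl fun σ _ => ?_
  rw [filter_filter, ← sum_prod_filter_parity_eq]
  split_ifs with hσ
  · refine sum_congr (filter_congr fun m _ => ?_) fun _ _ => rfl
    rw [sources_eq_sourcesMod2]
    exact and_iff_right_of_imp fun h => h ▸ hσ
  · refine sum_eq_zero fun m hm => absurd ?_ hσ
    obtain ⟨hX, rfl⟩ := (mem_filter.mp hm).2
    rwa [← sources_eq_sourcesMod2]

theorem sum_filter_sources_symmDiff_eq {s t : E → V} {f : E → ℕ → R} {n : E → ℕ}
    {x y : V}
    (hbal : ∀ e, n e ≠ 0 → parityPart (f e) (n e) 0 = parityPart (f e) (n e) 1)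
    (hconn : ConnectedIn s t n x y) (X : Set V) :
    ∑ m ∈ Iic n with sources s t m = X ∆ ({x} ∆ {y}), ∏ e, f e (m e)
      = ∑ m ∈ Iic n with sources s t m = X, ∏ e, f e (m e) := by
  obtain ⟨τ, hτn, hτ⟩ := exists_sourcesMod2_eq_of_reachable hconn
  have hshift : ∀ σ, ∏ e, parityPart (f e) (n e) ((σ + τ) e)
      = ∏ e, parityPart (f e) (n e) (σ e) := by
    refine fun σ => prod_congr rfl fun e _ => ?_
    rcases (by decide : ∀ a : ZMod 2, a = 0 ∨ a = 1) (τ e) with he | he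
    · rw [Pi.add_apply, he, add_zero]
    · rw [Pi.add_apply, he, parityPart_add_one (hbal e (hτn e (he ▸ one_ne_zero)))]
  rw [sum_filter_sources_eq, sum_filter_sources_eq, sum_filter, sum_filter]
  refine (Fintype.sum_equiv (Equiv.addRight τ) _ _ fun σ => ?_).symm
  simp only [Equiv.coe_addRight, sourcesMod2_add, hτ, symmDiff_left_inj, hshift]

end Switching

section Poisson

theorem parityPart_choose_zero_eq_one {N : ℕ} (hN : N ≠ 0) :
    parityPart (fun k => (N.choose k : ℝ)) N 0
      = parityPart (fun k => (N.choose k : ℝ)) N 1 := by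
  have halt : ∑ k ∈ Iic N, (-1 : ℝ) ^ k * N.choose k = 0 := by
    rw [← Nat.range_succ_eq_Iic]
    exact_mod_cast (Int.alternating_sum_range_choose (n := N)).trans (if_neg hN)
  rw [← sub_eq_zero, ← halt, parityPart, parityPart, sum_filter, sum_filter,
    ← sum_sub_distrib]
  refine sum_congr rfl fun k _ => ?_
  rcases Nat.even_or_odd k with hk | hk
  · rw [(ZMod.natCast_eq_zero_iff_even).2 hk, hk.neg_one_pow]
    simp
  · rw [(ZMod.natCast_eq_one_iff_odd).2 hk, hk.neg_one_pow]
    simp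

-- The factor of `poissonWt`; Mathlib's `ProbabilityTheory.poissonPMFReal` needs an `ℝ≥0` rate.
noncomputable def poissonTerm (μ : ℝ) (k : ℕ) : ℝ :=
  Real.exp (-μ) * μ ^ k / k.factorial

theorem poissonTerm_mul_poissonTerm_sub (μ : ℝ) {k N : ℕ} (hk : k ≤ N) :
    poissonTerm μ k * poissonTerm μ (N - k) = Real.exp (-μ) * poissonTerm μ N * N.choose k := by
  rw [Nat.cast_choose ℝ hk, poissonTerm, poissonTerm, poissonTerm]
  field_simp
  rw [← pow_add, Nat.add_sub_cancel' hk]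

theorem parityPart_poissonTerm_zero_eq_one (μ : ℝ) {N : ℕ} (hN : N ≠ 0) :
    parityPart (fun k => poissonTerm μ k * poissonTerm μ (N - k)) N 0
      = parityPart (fun k => poissonTerm μ k * poissonTerm μ (N - k)) N 1 := by
  have hfactor : ∀ b, parityPart (fun k => poissonTerm μ k * poissonTerm μ (N - k)) N b
      = Real.exp (-μ) * poissonTerm μ N * parityPart (fun k => (N.choose k : ℝ)) N b := by
    intro b
    rw [parityPart, parityPart, mul_sum]
    refine sum_congr rfl fun k hk => ?_
    exact poissonTerm_mul_poissonTerm_sub μ (mem_Iic.mp (mem_filter.mp hk).1)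
  rw [hfactor, hfactor, parityPart_choose_zero_eq_one hN]

variable {V E : Type} [Fintype E] [DecidableEq V]

theorem poissonProb2_and_add_eq (lam : E → ℝ) (P : (E → ℕ) → (E → ℕ) → Prop)
    (n : E → ℕ) :
    poissonProb2 lam (fun m m' => P m m' ∧ m + m' = n)
      = ∑ m ∈ Iic n with P m (n - m), poissonWt lam m * poissonWt lam (n - m) := by
  rw [poissonProb2, tsum_eq_sum (s := Iic n) ?outside, sum_filter]
  case outside =>
    intro m hm
    refine (tsum_congr fun m' => ?_).trans tsum_zero
    rw [if_neg fun h : P m m' ∧ m + m' = n => hm (mem_Iic.mpr (h.2 ▸ le_self_add)), mul_zero]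
  refine sum_congr rfl fun m hm => ?_
  rw [tsum_eq_single (n - m) fun m' hm' => by
    rw [if_neg fun h => hm' (eq_tsub_of_add_eq ((add_comm _ _).trans h.2)), mul_zero]]
  by_cases hP : P m (n - m) <;> simp [hP, add_tsub_cancel_of_le (mem_Iic.mp hm)]

theorem poissonProb2_sources_eq (s t : E → V) (lam : E → ℝ) (X B : Set V) (n : E → ℕ) :
    poissonProb2 lam (fun m m' => sources s t m = X ∧ sources s t m' = B ∧ m + m' = n)
      = if sources s t n ∆ X = B then
          ∑ m ∈ Iic n with sources s t m = X,
            ∏ e, poissonTerm (lam e) (m e) * poissonTerm (lam e) (n e - m e)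
        else 0 := by
  simp only [← and_assoc]
  rw [poissonProb2_and_add_eq]
  split_ifs with hB
  · refine sum_congr (Finset.ext fun m => ?_) fun m _ => prod_mul_distrib.symm
    simp only [mem_filter, mem_Iic]
    refine and_congr_right fun hm => ?_
    rw [sources_sub hm]
    exact and_iff_left_of_imp fun hX => hX ▸ hB
  · refine sum_eq_zero fun m hm => absurd ?_ hB
    simp only [mem_filter, mem_Iic] at hm
    obtain ⟨hm, hX, hnm⟩ := hm
    rwa [sources_sub hm, hX] at hnm

end Poisson

theorem switching_lemma_poisson_general
    (V E : Type) [DecidableEq V] [Fintype E]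
    (s t : E → V)
    (lam : ℝ)
    (x y : V) (hxy : x ≠ y) (A : Set V)
    (sv : E → ℕ) (hconn : ConnectedIn s t sv x y) :
    poissonProb2 (fun _ => lam)
        (fun mm mm' => sources s t mm = ({x, y} : Set V) ∧ sources s t mm' = A ∧
          mm + mm' = sv)
      = poissonProb2 (fun _ => lam)
          (fun mm mm' => sources s t mm = (∅ : Set V) ∧
            sources s t mm' = A ∆ ({x, y} : Set V) ∧ mm + mm' = sv) := by
  have hpair : ({x, y} : Set V) = ∅ ∆ ({x} ∆ {y}) := by
    rw [← Set.bot_eq_empty, bot_symmDiff, Set.singleton_symmDiff_singleton hxy]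
  rw [poissonProb2_sources_eq, poissonProb2_sources_eq]
  refine if_congr ?_ ?_ rfl
  · rw [← Set.bot_eq_empty, symmDiff_bot, ← symmDiff_left_inj (b := {x, y}),
      symmDiff_symmDiff_cancel_right]
  · rw [hpair]
    exact sum_filter_sources_symmDiff_eq
      (fun _ hN => parityPart_poissonTerm_zero_eq_one lam hN) hconn ∅

/-- Switching lemma, Poisson version: if `x ↔ y` in `sv` then
`P(∂M = {x,y}, ∂M' = A, M + M' = sv) = P(∂M = ∅, ∂M' = A ∆ {x,y}, M + M' = sv)`. -/
theorem switching_lemma_poisson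
    (V E : Type) [Fintype V] [DecidableEq V] [Fintype E]
    (s t : E → V) (hloop : ∀ e, s e ≠ t e)
    (lam : ℝ) (hlam : 0 ≤ lam)
    (x y : V) (hxy : x ≠ y) (A : Set V)
    (sv : E → ℕ) (hconn : ConnectedIn s t sv x y) :
    poissonProb2 (fun _ => lam)
        (fun mm mm' => sources s t mm = ({x, y} : Set V) ∧ sources s t mm' = A ∧
          mm + mm' = sv)
      = poissonProb2 (fun _ => lam)
          (fun mm mm' => sources s t mm = (∅ : Set V) ∧
            sources s t mm' = A ∆ ({x, y} : Set V) ∧ mm + mm' = sv) :=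
  switching_lemma_poisson_general V E s t lam x y hxy A sv hconn
end

section
/- Simon inequality. Let G=(V,E) be a finite graph without loops, λ ≥ 0, and let σ(·,·) be the Ising two-point function with λ_e = λ for all edges. Let x,z ∈ V be distinct, and let W ⊆ V separate x and z, i.e. x,z ∉ W and every path in G from x to z contains some vertex of W. Then σ(x,z) ≤ Σ_{y∈W} σ(x,y)·σ(y,z). -/
open scoped BigOperators symmDiff Classical

noncomputable section SimonAuxSec
namespace SimonAux
open Finset
open scoped symmDiff Classical

/-- indicator of a vertex, ZMod 2 valued -/
def dl {V : Type} [DecidableEq V] (x : V) : V → ZMod 2 := fun v => if v = x then 1 else 0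

/-- mod-2 degree function of an edge set -/
def Dd {V E : Type} [DecidableEq V] (s t : E → V) (η : Finset E) : V → ZMod 2 :=
  fun v => ∑ e ∈ η, ((if s e = v then 1 else 0) + (if t e = v then 1 else 0) : ZMod 2)

/-- natural-number degree of an edge set -/
def dN {V E : Type} [DecidableEq V] (s t : E → V) (η : Finset E) (v : V) : ℕ :=
  ∑ e ∈ η, ((if s e = v then 1 else 0) + (if t e = v then 1 else 0))

def Xv : Fin 2 → ℝ := fun i => if i = 0 then 1 else -1

def wgt {E : Type} [Fintype E] (lam : ℝ) (η : Finset E) : ℝ :=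
  ∏ e : E, if e ∈ η then Real.sinh lam else Real.cosh lam

def Zs {V E : Type} [Fintype V] [DecidableEq V] [Fintype E] (s t : E → V)
    (lam : ℝ) (B : V → ZMod 2) : ℝ :=
  ∑ η : Finset E, if Dd s t η = B then wgt lam η else 0

section Lemmas

variable {V E : Type} [DecidableEq V] (s t : E → V)

lemma Dd_symmDiff (η₁ η₂ : Finset E) : Dd s t (η₁ ∆ η₂) = Dd s t η₁ + Dd s t η₂ := by
  classical
  funext v
  simp only [Dd, Pi.add_apply]
  have h1 : η₁ ∆ η₂ = (η₁ \ η₂) ∪ (η₂ \ η₁) := by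
    rw [symmDiff_def]; rfl
  have hd : Disjoint (η₁ \ η₂) (η₂ \ η₁) := disjoint_sdiff_sdiff
  rw [h1, Finset.sum_union hd]
  have e1 := Finset.sum_inter_add_sum_sdiff η₁ η₂
    (fun e => ((if s e = v then 1 else 0) + (if t e = v then 1 else 0) : ZMod 2))
  have e2 := Finset.sum_inter_add_sum_sdiff η₂ η₁
    (fun e => ((if s e = v then 1 else 0) + (if t e = v then 1 else 0) : ZMod 2))
  rw [inter_comm η₂ η₁] at e2
  have h0 : ∀ a : ZMod 2, a + a = 0 := fun a => CharTwo.add_self_eq_zero a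
  linear_combination e1 + e2 - h0 (∑ e ∈ η₁ ∩ η₂,
    ((if s e = v then 1 else 0) + (if t e = v then 1 else 0) : ZMod 2))

lemma Dd_single (e : E) : Dd s t ({e} : Finset E) = dl (s e) + dl (t e) := by
  funext v
  simp only [Dd, dl, Finset.sum_singleton, Pi.add_apply]
  congr 1 <;> simp [eq_comm]

lemma exists_gamma_walk (η : Finset E) {a b : V}
    (w : (openGraph s t (· ∈ η)).Walk a b) :
    ∃ γ : Finset E, γ ⊆ η ∧ Dd s t γ = dl a + dl b := by
  classical
  induction w with
  | nil =>
    refine ⟨∅, Finset.empty_subset _, ?_⟩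
    funext v
    simp only [Dd, Finset.sum_empty, Pi.add_apply, dl]
    exact (CharTwo.add_self_eq_zero _).symm
  | @cons a c b hadj w ih =>
    obtain ⟨γ', hsub, hD⟩ := ih
    rw [openGraph, SimpleGraph.fromRel_adj] at hadj
    obtain ⟨hne, he⟩ := hadj
    have hedge : ∃ e, e ∈ η ∧ dl (s e) + dl (t e) = dl a + dl c := by
      rcases he with ⟨e, he, h1, h2⟩ | ⟨e, he, h1, h2⟩
      · exact ⟨e, he, by rw [h1, h2]⟩
      · exact ⟨e, he, by rw [h1, h2, add_comm]⟩
    obtain ⟨e, heη, hDe⟩ := hedge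
    refine ⟨γ' ∆ {e}, ?_, ?_⟩
    · intro i hi
      rcases Finset.mem_symmDiff.1 hi with ⟨h1, _⟩ | ⟨h1, _⟩
      · exact hsub h1
      · simpa using (by simpa using h1 : i = e) ▸ heη
    · rw [Dd_symmDiff, hD, Dd_single, hDe]
      funext v
      simp only [Pi.add_apply]
      have key : ∀ p q r : ZMod 2, (q + r) + (p + q) = p + r := by decide
      exact key _ _ _

lemma reach_of_sources [Fintype V] (η : Finset E) (x z : V) (hxz : x ≠ z)
    (hD : Dd s t η = dl x + dl z) :
    (openGraph s t (· ∈ η)).Reachable x z := by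
  classical
  by_contra hnr
  set G := openGraph s t (· ∈ η) with hG
  set C : Finset V := Finset.univ.filter (fun v => G.Reachable x v) with hC
  have hmemC : ∀ v, v ∈ C ↔ G.Reachable x v := by
    intro v; simp [hC]
  have h1 : ∑ v ∈ C, Dd s t η v = 0 := by
    simp only [Dd]
    rw [Finset.sum_comm]
    refine Finset.sum_eq_zero fun e he => ?_
    rw [Finset.sum_add_distrib, Finset.sum_ite_eq, Finset.sum_ite_eq]
    have hiff : s e ∈ C ↔ t e ∈ C := by
      by_cases hst : s e = t e
      · rw [hst]
      · have hadj : G.Adj (s e) (t e) := by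
          rw [hG, openGraph, SimpleGraph.fromRel_adj]
          exact ⟨hst, Or.inl ⟨e, he, rfl, rfl⟩⟩
        rw [hmemC, hmemC]
        exact ⟨fun h => h.trans hadj.reachable, fun h => h.trans hadj.symm.reachable⟩
    by_cases h : s e ∈ C
    · rw [if_pos h, if_pos (hiff.1 h)]; decide
    · rw [if_neg h, if_neg (fun hh => h (hiff.2 hh))]; decide
  have h2 : ∑ v ∈ C, Dd s t η v = 1 := by
    rw [hD]
    simp only [Pi.add_apply, dl, Finset.sum_add_distrib]
    have hx : x ∈ C := (hmemC x).2 (SimpleGraph.Reachable.refl x)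
    have hz : z ∉ C := fun h => hnr ((hmemC z).1 h)
    rw [show (∑ v ∈ C, if v = x then (1:ZMod 2) else 0) = 1 by
          rw [Finset.sum_ite_eq' C x (fun _ => (1:ZMod 2))]; simp [hx],
        show (∑ v ∈ C, if v = z then (1:ZMod 2) else 0) = 0 by
          rw [Finset.sum_ite_eq' C z (fun _ => (1:ZMod 2))]; simp [hz]]
    decide
  rw [h1] at h2
  exact absurd h2 (by decide)

lemma openGraph_le (η : Finset E) :
    openGraph s t (· ∈ η) ≤ openGraph s t (fun _ => True) := by
  intro a b hab
  rw [openGraph, SimpleGraph.fromRel_adj] at hab ⊢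
  refine ⟨hab.1, ?_⟩
  rcases hab.2 with ⟨e, _, h⟩ | ⟨e, _, h⟩
  · exact Or.inl ⟨e, trivial, h⟩
  · exact Or.inr ⟨e, trivial, h⟩

lemma exists_y_gamma [Fintype V] (x z : V) (hxz : x ≠ z) (W : Finset V)
    (hsep : ∀ w : (openGraph s t fun _ => True).Walk x z, w.IsPath →
      ∃ y ∈ W, y ∈ w.support)
    (η : Finset E) (hD : Dd s t η = dl x + dl z) :
    ∃ yγ : V × Finset E, yγ.1 ∈ W ∧ yγ.2 ⊆ η ∧ Dd s t yγ.2 = dl yγ.1 + dl z := by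
  classical
  obtain ⟨w⟩ := reach_of_sources s t η x z hxz hD
  set w' := w.mapLe (openGraph_le s t η) with hw'
  obtain ⟨y, hyW, hysupp⟩ := hsep (w'.toPath : _) (w'.toPath.isPath)
  have hsupp : y ∈ w'.support := w'.support_toPath_subset hysupp
  have hsupp2 : y ∈ w.support := by
    rw [hw'] at hsupp
    simpa [SimpleGraph.Walk.mapLe, SimpleGraph.Walk.support_map] using hsupp
  have hrz : (openGraph s t (· ∈ η)).Reachable y z := ⟨w.dropUntil y hsupp2⟩
  obtain ⟨w2⟩ := hrz
  obtain ⟨γ, hγ, hDγ⟩ := exists_gamma_walk s t η w2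
  exact ⟨(y, γ), hyW, hγ, hDγ⟩

end Lemmas

lemma Xv_cases (i : Fin 2) : Xv i = 1 ∨ Xv i = -1 := by
  fin_cases i <;> simp [Xv]

lemma Xv_edge (a b : Fin 2) : (2 : ℝ) * (if a = b then 1 else 0) - 1 = Xv a * Xv b := by
  fin_cases a <;> fin_cases b <;> norm_num [Xv]

lemma Xv_exp (lam : ℝ) (a b : Fin 2) :
    Real.exp (lam * (Xv a * Xv b)) =
      Real.cosh lam + Real.sinh lam * (Xv a * Xv b) := by
  rcases Xv_cases a with ha | ha <;> rcases Xv_cases b with hb | hb <;>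
    rw [ha, hb] <;> norm_num [Real.cosh_add_sinh, Real.cosh_sub_sinh] <;>
    rw [show -lam = lam * -1 by ring] <;> ring_nf <;>
    rw [← Real.cosh_sub_sinh] <;> ring_nf

lemma Xv_pow (i : Fin 2) (n : ℕ) : Xv i ^ n = if Even n then 1 else Xv i := by
  rcases Nat.even_or_odd n with h | h
  · obtain ⟨k, hk⟩ := h
    rw [if_pos ⟨k, hk⟩, hk, show k + k = 2 * k by ring, pow_mul]
    have : Xv i ^ 2 = 1 := by rcases Xv_cases i with h' | h' <;> rw [h'] <;> norm_num
    rw [this, one_pow]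
  · obtain ⟨k, hk⟩ := h
    rw [if_neg (by simp [hk, parity_simps]), hk, pow_succ, pow_mul]
    have : Xv i ^ 2 = 1 := by rcases Xv_cases i with h' | h' <;> rw [h'] <;> norm_num
    rw [this, one_pow, one_mul]

lemma Xv_sum_pow (n : ℕ) : ∑ i : Fin 2, Xv i ^ n = if Even n then 2 else 0 := by
  simp only [Xv_pow]
  by_cases h : Even n <;> simp [h, Xv]

lemma even_iff_cast (n : ℕ) : Even n ↔ (n : ZMod 2) = 0 := by
  rw [even_iff_two_dvd, ← ZMod.natCast_eq_zero_iff]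

lemma zmod2_add_eq_zero (a b : ZMod 2) : a + b = 0 ↔ a = b := by revert a b; decide

section Master

variable {V E : Type} [Fintype V] [DecidableEq V] [Fintype E] (s t : E → V)

lemma Dd_eq_cast_dN (η : Finset E) (v : V) : Dd s t η v = (dN s t η v : ZMod 2) := by
  simp only [Dd, dN]
  push_cast
  rfl

lemma prod_Xv_dN (σ : V → Fin 2) (η : Finset E) :
    ∏ e ∈ η, (Xv (σ (s e)) * Xv (σ (t e))) = ∏ v : V, Xv (σ v) ^ dN s t η v := by
  have h1 : ∀ e : E, ∏ v : V, Xv (σ v) ^ ((if s e = v then 1 else 0) + (if t e = v then 1 else 0) : ℕ)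
      = Xv (σ (s e)) * Xv (σ (t e)) := by
    intro e
    rw [show (∏ v : V, Xv (σ v) ^ ((if s e = v then 1 else 0) + (if t e = v then 1 else 0) : ℕ))
        = ∏ v : V, (if s e = v then Xv (σ v) else 1) * (if t e = v then Xv (σ v) else 1) by
      refine Finset.prod_congr rfl fun v _ => ?_
      rw [pow_add]
      congr 1 <;> split <;> simp]
    rw [Finset.prod_mul_distrib, Finset.prod_ite_eq, Finset.prod_ite_eq]
    simp
  calc ∏ e ∈ η, (Xv (σ (s e)) * Xv (σ (t e)))
      = ∏ e ∈ η, ∏ v : V, Xv (σ v) ^ ((if s e = v then 1 else 0) + (if t e = v then 1 else 0) : ℕ) := by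
        exact Finset.prod_congr rfl fun e _ => (h1 e).symm
    _ = ∏ v : V, ∏ e ∈ η, Xv (σ v) ^ ((if s e = v then 1 else 0) + (if t e = v then 1 else 0) : ℕ) :=
        Finset.prod_comm
    _ = ∏ v : V, Xv (σ v) ^ dN s t η v := by
        refine Finset.prod_congr rfl fun v _ => ?_
        rw [dN, ← Finset.prod_pow_eq_pow_sum]

lemma sum_sigma_prod_pow (m : V → ℕ) :
    ∑ σ : V → Fin 2, ∏ v : V, Xv (σ v) ^ m v
      = if (∀ v, Even (m v)) then (2 : ℝ) ^ Fintype.card V else 0 := by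
  rw [← Fintype.piFinset_univ,
    ← Finset.prod_univ_sum (fun _ => (univ : Finset (Fin 2))) (fun v j => Xv j ^ m v)]
  by_cases h : ∀ v, Even (m v)
  · rw [if_pos h]
    rw [show (∏ v : V, ∑ i : Fin 2, Xv i ^ m v) = ∏ _v : V, (2:ℝ) by
      refine Finset.prod_congr rfl fun v _ => ?_
      rw [Xv_sum_pow, if_pos (h v)]]
    simp [Finset.prod_const]
  · push_neg at h
    obtain ⟨v0, hv0⟩ := h
    rw [if_neg (by push_neg; exact ⟨v0, hv0⟩)]
    refine Finset.prod_eq_zero (Finset.mem_univ v0) ?_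
    rw [Xv_sum_pow, if_neg hv0]

lemma wgt_eq (lam : ℝ) (η : Finset E) :
    wgt (E := E) lam η = Real.sinh lam ^ η.card * Real.cosh lam ^ (univ \ η).card := by
  rw [wgt, Finset.prod_ite (fun _ => Real.sinh lam) (fun _ => Real.cosh lam),
    Finset.prod_const, Finset.prod_const]
  congr 2
  · rw [Finset.filter_mem_eq_inter, Finset.univ_inter]
  · rw [Finset.filter_not, Finset.filter_mem_eq_inter, Finset.univ_inter]

lemma cond_iff (nI : V → ℕ) (η : Finset E) :
    (∀ v, Even (nI v + dN s t η v)) ↔ Dd s t η = (fun v => (nI v : ZMod 2)) := by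
  constructor
  · intro h
    funext v
    have := (even_iff_cast _).1 (h v)
    push_cast at this
    rw [← Dd_eq_cast_dN] at this
    exact ((zmod2_add_eq_zero _ _).1 (by linear_combination this)).symm
  · intro h v
    rw [even_iff_cast]
    push_cast
    rw [← Dd_eq_cast_dN, h]
    exact (zmod2_add_eq_zero _ _).2 rfl

lemma master (lam : ℝ) (nI : V → ℕ) :
    ∑ σ : V → Fin 2, (∏ v, Xv (σ v) ^ nI v) * pottsWt s t 2 1 (fun _ => lam) σ
      = 2 ^ Fintype.card V * Zs s t lam (fun v => (nI v : ZMod 2)) := by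
  have hw : ∀ σ : V → Fin 2, pottsWt s t 2 1 (fun _ => lam) σ
      = ∏ e : E, (Real.sinh lam * (Xv (σ (s e)) * Xv (σ (t e))) + Real.cosh lam) := by
    intro σ
    rw [pottsWt, Real.exp_sum]
    refine Finset.prod_congr rfl fun e _ => ?_
    rw [show (1 : ℝ) * lam * (((2:ℕ) : ℝ) * (if σ (s e) = σ (t e) then 1 else 0) - 1)
        = lam * (Xv (σ (s e)) * Xv (σ (t e))) by
      rw [← Xv_edge]; push_cast; ring]
    rw [Xv_exp, add_comm]
  calc ∑ σ : V → Fin 2, (∏ v, Xv (σ v) ^ nI v) * pottsWt s t 2 1 (fun _ => lam) σ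
      = ∑ σ : V → Fin 2, ∑ η : Finset E,
          (∏ v, Xv (σ v) ^ nI v) *
            ((∏ e ∈ η, Real.sinh lam * (Xv (σ (s e)) * Xv (σ (t e)))) *
              ∏ e ∈ univ \ η, Real.cosh lam) := by
        refine Finset.sum_congr rfl fun σ _ => ?_
        rw [hw σ, Finset.prod_add, Finset.mul_sum, Finset.powerset_univ]
    _ = ∑ η : Finset E, wgt lam η *
          ∑ σ : V → Fin 2, ∏ v, Xv (σ v) ^ (nI v + dN s t η v) := by
        rw [Finset.sum_comm]
        refine Finset.sum_congr rfl fun η _ => ?_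
        rw [Finset.mul_sum]
        refine Finset.sum_congr rfl fun σ _ => ?_
        rw [Finset.prod_mul_distrib, Finset.prod_const, wgt_eq, Finset.prod_const]
        rw [show ∀ a b c d : ℝ, a * (b * c * d) = (b * d) * (a * c) by intros; ring]
        congr 1
        rw [prod_Xv_dN, ← Finset.prod_mul_distrib]
        exact Finset.prod_congr rfl fun v _ => (pow_add _ _ _).symm
    _ = ∑ η : Finset E, wgt lam η *
          (if Dd s t η = (fun v => (nI v : ZMod 2)) then (2:ℝ) ^ Fintype.card V else 0) := by
        refine Finset.sum_congr rfl fun η _ => ?_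
        rw [sum_sigma_prod_pow]
        congr 1
        by_cases h : Dd s t η = (fun v => (nI v : ZMod 2))
        · rw [if_pos ((cond_iff s t nI η).2 h), if_pos h]
        · rw [if_neg (fun hh => h ((cond_iff s t nI η).1 hh)), if_neg h]
    _ = 2 ^ Fintype.card V * Zs s t lam (fun v => (nI v : ZMod 2)) := by
        rw [Zs, Finset.mul_sum]
        refine Finset.sum_congr rfl fun η _ => ?_
        by_cases h : Dd s t η = (fun v => (nI v : ZMod 2)) <;> simp [h] <;> ring

end Master

section Switch

variable {E : Type} [Fintype E]

lemma wgt_nonneg {lam : ℝ} (hlam : 0 ≤ lam) (η : Finset E) : 0 ≤ wgt lam η := by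
  refine Finset.prod_nonneg fun e _ => ?_
  split
  · rw [← Real.sinh_zero]; exact Real.sinh_le_sinh.2 hlam
  · exact (Real.cosh_pos lam).le

lemma wgt_switch (lam : ℝ) {α β γ : Finset E} [DecidableEq E] (hγ : γ ⊆ α ∆ β) :
    wgt lam (α ∆ γ) * wgt lam (β ∆ γ) = wgt lam α * wgt lam β := by
  rw [wgt, wgt, wgt, wgt, ← Finset.prod_mul_distrib, ← Finset.prod_mul_distrib]
  refine Finset.prod_congr rfl fun e _ => ?_
  by_cases hg : e ∈ γ
  · have h := hγ hg
    rw [Finset.mem_symmDiff] at h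
    rcases h with ⟨ha, hb⟩ | ⟨hb, ha⟩
    · rw [if_neg (by simp [Finset.mem_symmDiff, ha, hg]),
        if_pos (by rw [Finset.mem_symmDiff]; exact Or.inr ⟨hg, hb⟩),
        if_pos ha, if_neg hb, mul_comm]
    · rw [if_pos (by rw [Finset.mem_symmDiff]; exact Or.inr ⟨hg, ha⟩),
        if_neg (by simp [Finset.mem_symmDiff, hb, hg]),
        if_neg ha, if_pos hb, mul_comm]
  · have h1 : e ∈ α ∆ γ ↔ e ∈ α := by simp [Finset.mem_symmDiff, hg]
    have h2 : e ∈ β ∆ γ ↔ e ∈ β := by simp [Finset.mem_symmDiff, hg]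
    by_cases ha : e ∈ α <;> by_cases hb : e ∈ β <;> simp [h1, h2, ha, hb]

lemma symmDiff_pair [DecidableEq E] (a b c : Finset E) : (a ∆ c) ∆ (b ∆ c) = a ∆ b := by
  ext i; simp only [Finset.mem_symmDiff]; tauto

lemma symmDiff_cancel' [DecidableEq E] (a c : Finset E) : (a ∆ c) ∆ c = a := by
  ext i; simp only [Finset.mem_symmDiff]; tauto

end Switch

section Key

variable {V E : Type} [Fintype V] [DecidableEq V] [Fintype E] (s t : E → V)

lemma Zs_mul_Zs (lam : ℝ) (A B : V → ZMod 2) :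
    Zs s t lam A * Zs s t lam B
      = ∑ p ∈ (univ ×ˢ univ : Finset (Finset E × Finset E)),
          (if Dd s t p.1 = A ∧ Dd s t p.2 = B then wgt lam p.1 * wgt lam p.2 else 0) := by
  rw [Zs, Zs, Finset.sum_mul_sum, Finset.sum_product]
  refine Finset.sum_congr rfl fun η₁ _ => Finset.sum_congr rfl fun η₂ _ => ?_
  by_cases h1 : Dd s t η₁ = A <;> by_cases h2 : Dd s t η₂ = B <;> simp [h1, h2]

lemma Zs_zero_pos {lam : ℝ} (hlam : 0 ≤ lam) : 0 < Zs s t lam 0 := by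
  classical
  rw [Zs]
  refine Finset.sum_pos' (fun η _ => ?_) ⟨∅, Finset.mem_univ _, ?_⟩
  · split
    · exact wgt_nonneg hlam η
    · exact le_refl 0
  · rw [if_pos (by funext v; simp [Dd])]
    rw [wgt]
    refine Finset.prod_pos fun e _ => ?_
    simp [Real.cosh_pos]

lemma key_ineq (lam : ℝ) (hlam : 0 ≤ lam) (x z : V) (hxz : x ≠ z) (W : Finset V)
    (hsep : ∀ w : (openGraph s t fun _ => True).Walk x z, w.IsPath →
      ∃ y ∈ W, y ∈ w.support) :
    Zs s t lam (dl x + dl z) * Zs s t lam 0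
      ≤ ∑ y ∈ W, Zs s t lam (dl x + dl y) * Zs s t lam (dl y + dl z) := by
  classical
  have hpick : ∀ (ξ : Finset E), Dd s t ξ = dl x + dl z →
      ∃ yγ : V × Finset E, yγ.1 ∈ W ∧ yγ.2 ⊆ ξ ∧ Dd s t yγ.2 = dl yγ.1 + dl z :=
    fun ξ h => exists_y_gamma s t x z hxz W hsep ξ h
  set pk : Finset E → V × Finset E := fun ξ =>
    if h : Dd s t ξ = dl x + dl z then (hpick ξ h).choose else (x, ∅) with hpk
  have pk_spec : ∀ ξ (h : Dd s t ξ = dl x + dl z),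
      (pk ξ).1 ∈ W ∧ (pk ξ).2 ⊆ ξ ∧ Dd s t (pk ξ).2 = dl (pk ξ).1 + dl z := by
    intro ξ h
    rw [hpk]
    simp only [dif_pos h]
    exact (hpick ξ h).choose_spec
  set S0 : Finset (Finset E × Finset E) :=
    (univ ×ˢ univ).filter (fun p => Dd s t p.1 = dl x + dl z ∧ Dd s t p.2 = 0) with hS0
  set T : Finset (V × Finset E × Finset E) :=
    (W ×ˢ (univ ×ˢ univ)).filter
      (fun q => Dd s t q.2.1 = dl x + dl q.1 ∧ Dd s t q.2.2 = dl q.1 + dl z) with hT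
  set Φ : Finset E × Finset E → V × Finset E × Finset E := fun p =>
    ((pk (p.1 ∆ p.2)).1, p.1 ∆ (pk (p.1 ∆ p.2)).2, p.2 ∆ (pk (p.1 ∆ p.2)).2) with hΦ
  have hS0mem : ∀ p ∈ S0, Dd s t p.1 = dl x + dl z ∧ Dd s t p.2 = 0 := by
    intro p hp
    exact (Finset.mem_filter.1 hp).2
  have hxi : ∀ p ∈ S0, Dd s t (p.1 ∆ p.2) = dl x + dl z := by
    intro p hp
    rw [Dd_symmDiff, (hS0mem p hp).1, (hS0mem p hp).2, add_zero]
  have hmem : ∀ p ∈ S0, Φ p ∈ T := by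
    intro p hp
    obtain ⟨hy, hγ, hDγ⟩ := pk_spec _ (hxi p hp)
    refine Finset.mem_filter.2 ⟨Finset.mem_product.2 ⟨hy, Finset.mem_product.2
      ⟨Finset.mem_univ _, Finset.mem_univ _⟩⟩, ?_, ?_⟩
    · show Dd s t (p.1 ∆ (pk (p.1 ∆ p.2)).2) = _
      rw [Dd_symmDiff, (hS0mem p hp).1, hDγ]
      funext v
      simp only [Pi.add_apply]
      exact (by decide : ∀ a b c : ZMod 2, (a + c) + (b + c) = a + b) _ _ _
    · show Dd s t (p.2 ∆ (pk (p.1 ∆ p.2)).2) = _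
      rw [Dd_symmDiff, (hS0mem p hp).2, hDγ, zero_add]
  have hwt : ∀ p ∈ S0,
      wgt lam (Φ p).2.1 * wgt lam (Φ p).2.2 = wgt lam p.1 * wgt lam p.2 := by
    intro p hp
    exact wgt_switch lam (pk_spec _ (hxi p hp)).2.1
  have hinj : ∀ p ∈ S0, ∀ q ∈ S0, Φ p = Φ q → p = q := by
    intro p hp q hq h
    have hxipq : p.1 ∆ p.2 = q.1 ∆ q.2 := by
      have h1 : (Φ p).2.1 = (Φ q).2.1 := by rw [h]
      have h2 : (Φ p).2.2 = (Φ q).2.2 := by rw [h]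
      have e1 : (Φ p).2.1 ∆ (Φ p).2.2 = p.1 ∆ p.2 := symmDiff_pair _ _ _
      have e2 : (Φ q).2.1 ∆ (Φ q).2.2 = q.1 ∆ q.2 := symmDiff_pair _ _ _
      rw [← e1, ← e2, h1, h2]
    have hγeq : (pk (p.1 ∆ p.2)).2 = (pk (q.1 ∆ q.2)).2 := by rw [hxipq]
    have h1 : (Φ p).2.1 = (Φ q).2.1 := by rw [h]
    have h2 : (Φ p).2.2 = (Φ q).2.2 := by rw [h]
    simp only [hΦ] at h1 h2
    have hp1 : p.1 = q.1 := by
      have := congrArg (fun u => u ∆ (pk (p.1 ∆ p.2)).2) h1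
      simpa [hγeq, symmDiff_cancel'] using this
    have hp2 : p.2 = q.2 := by
      have := congrArg (fun u => u ∆ (pk (p.1 ∆ p.2)).2) h2
      simpa [hγeq, symmDiff_cancel'] using this
    exact Prod.ext hp1 hp2
  have hLHS : Zs s t lam (dl x + dl z) * Zs s t lam 0
      = ∑ p ∈ S0, wgt lam p.1 * wgt lam p.2 := by
    rw [Zs_mul_Zs, hS0, Finset.sum_filter]
  have hRHS : ∑ y ∈ W, Zs s t lam (dl x + dl y) * Zs s t lam (dl y + dl z)
      = ∑ q ∈ T, wgt lam q.2.1 * wgt lam q.2.2 := by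
    rw [hT, Finset.sum_filter, Finset.sum_product]
    refine Finset.sum_congr rfl fun y _ => ?_
    rw [Zs_mul_Zs, Finset.sum_product]
  rw [hLHS, hRHS]
  calc ∑ p ∈ S0, wgt lam p.1 * wgt lam p.2
      = ∑ p ∈ S0, wgt lam (Φ p).2.1 * wgt lam (Φ p).2.2 :=
        Finset.sum_congr rfl fun p hp => (hwt p hp).symm
    _ = ∑ q ∈ S0.image Φ, wgt lam q.2.1 * wgt lam q.2.2 :=
        (Finset.sum_image (f := fun q : V × Finset E × Finset E => wgt lam q.2.1 * wgt lam q.2.2) hinj).symm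
    _ ≤ ∑ q ∈ T, wgt lam q.2.1 * wgt lam q.2.2 := by
        refine Finset.sum_le_sum_of_subset_of_nonneg ?_ fun q _ _ =>
          mul_nonneg (wgt_nonneg hlam _) (wgt_nonneg hlam _)
        intro q hq
        obtain ⟨p, hp, rfl⟩ := Finset.mem_image.1 hq
        exact hmem p hp

end Key

end SimonAux
end SimonAuxSec

/-- Simon inequality: if `W` separates `x` and `z` then
`σ(x,z) ≤ ∑_{y ∈ W} σ(x,y) σ(y,z)` for the Ising two-point function. -/
theorem simon_inequality
    (V E : Type) [Fintype V] [DecidableEq V] [Fintype E]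
    (s t : E → V) (hloop : ∀ e, s e ≠ t e)
    (lam : ℝ) (hlam : 0 ≤ lam)
    (x z : V) (hxz : x ≠ z) (W : Finset V) (hxW : x ∉ W) (hzW : z ∉ W)
    (hsep : ∀ w : (openGraph s t fun _ => True).Walk x z, w.IsPath →
      ∃ y ∈ W, y ∈ w.support) :
    pottsTwoPoint s t 2 1 (fun _ => lam) x z ≤
      ∑ y ∈ W, pottsTwoPoint s t 2 1 (fun _ => lam) x y *
        pottsTwoPoint s t 2 1 (fun _ => lam) y z := by
  classical
  have hK : (0:ℝ) < 2 ^ Fintype.card V := by positivity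
  have hprod : ∀ (a b : V) (σ : V → Fin 2),
      (∏ v, SimonAux.Xv (σ v) ^ ((if v = a then 1 else 0) + (if v = b then 1 else 0) : ℕ))
        = SimonAux.Xv (σ a) * SimonAux.Xv (σ b) := by
    intro a b σ
    rw [show (∏ v, SimonAux.Xv (σ v) ^ ((if v = a then 1 else 0) + (if v = b then 1 else 0) : ℕ))
        = ∏ v, (if v = a then SimonAux.Xv (σ v) else 1) * (if v = b then SimonAux.Xv (σ v) else 1) by
      refine Finset.prod_congr rfl fun v _ => ?_
      rw [pow_add]
      congr 1 <;> split <;> simp]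
    rw [Finset.prod_mul_distrib, Finset.prod_ite_eq', Finset.prod_ite_eq']
    simp
  have hcast : ∀ a b : V,
      (fun v => (((if v = a then 1 else 0) + (if v = b then 1 else 0) : ℕ) : ZMod 2))
        = SimonAux.dl a + SimonAux.dl b := by
    intro a b
    funext v
    simp [SimonAux.dl, Pi.add_apply, apply_ite (Nat.cast (R := ZMod 2))]
  have hnum : ∀ a b : V,
      (∑ σ : V → Fin 2, (((2:ℕ) : ℝ) * (if σ a = σ b then 1 else 0) - 1) *
          pottsWt s t 2 1 (fun _ => lam) σ)
        = 2 ^ Fintype.card V * SimonAux.Zs s t lam (SimonAux.dl a + SimonAux.dl b) := by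
    intro a b
    have hm := SimonAux.master s t lam
      (fun v => ((if v = a then 1 else 0) + (if v = b then 1 else 0) : ℕ))
    rw [hcast a b] at hm
    rw [← hm]
    refine Finset.sum_congr rfl fun σ _ => ?_
    rw [hprod a b σ]
    congr 1
    rw [← SimonAux.Xv_edge]
    push_cast
    ring
  have hB0 : (fun _ : V => ((0:ℕ) : ZMod 2)) = (0 : V → ZMod 2) := by
    funext v; simp
  have hden : pottsZ V s t 2 1 (fun _ => lam)
      = 2 ^ Fintype.card V * SimonAux.Zs s t lam 0 := by
    have hm := SimonAux.master s t lam (fun _ => 0)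
    rw [hB0] at hm
    rw [pottsZ, ← hm]
    refine Finset.sum_congr rfl fun σ _ => ?_
    simp
  have htp : ∀ a b : V, pottsTwoPoint s t 2 1 (fun _ => lam) a b
      = SimonAux.Zs s t lam (SimonAux.dl a + SimonAux.dl b) / SimonAux.Zs s t lam 0 := by
    intro a b
    rw [pottsTwoPoint, hnum a b, hden, mul_div_mul_left _ _ (ne_of_gt hK)]
  have hZ0 : 0 < SimonAux.Zs s t lam 0 := SimonAux.Zs_zero_pos s t hlam
  have hkey := SimonAux.key_ineq s t lam hlam x z hxz W hsep
  rw [htp x z]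
  calc SimonAux.Zs s t lam (SimonAux.dl x + SimonAux.dl z) / SimonAux.Zs s t lam 0
      = (SimonAux.Zs s t lam (SimonAux.dl x + SimonAux.dl z) * SimonAux.Zs s t lam 0) /
          (SimonAux.Zs s t lam 0 * SimonAux.Zs s t lam 0) := by
        rw [mul_div_mul_right _ _ (ne_of_gt hZ0)]
    _ ≤ (∑ y ∈ W, SimonAux.Zs s t lam (SimonAux.dl x + SimonAux.dl y) *
          SimonAux.Zs s t lam (SimonAux.dl y + SimonAux.dl z)) /
          (SimonAux.Zs s t lam 0 * SimonAux.Zs s t lam 0) := by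
        exact (div_le_div_iff_of_pos_right (by positivity)).2 hkey
    _ = ∑ y ∈ W, pottsTwoPoint s t 2 1 (fun _ => lam) x y *
          pottsTwoPoint s t 2 1 (fun _ => lam) y z := by
        rw [Finset.sum_div]
        refine Finset.sum_congr rfl fun y _ => ?_
        rw [htp x y, htp y z, div_mul_div_comm]
end

section
/- Simon inequality, random-cluster form with q=2. Let G=(V,E) be a finite graph without loops, p ∈ [0,1], and let φ_{p,2} be the random-cluster measure on {0,1}^E with parameters p and q=2. If W ⊆ V separates the distinct vertices x and z (x,z ∉ W and every path in G from x to z contains some vertex of W), then φ_{p,2}(x ↔ z) ≤ Σ_{y∈W} φ_{p,2}(x ↔ y)·φ_{p,2}(y ↔ z). -/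
open scoped BigOperators symmDiff Classical

noncomputable section SimonAux

def sg (b : Bool) : ℝ := if b then 1 else -1

lemma sg_pow (b : Bool) (n : ℕ) : (sg b)^n = if Even n then 1 else sg b := by
  cases b
  · rcases Nat.even_or_odd n with h | h
    · simp [sg, h, h.neg_one_pow]
    · simp [sg, h.neg_one_pow, Nat.not_even_iff_odd.mpr h]
  · simp [sg]

lemma sum_prod_fun {ι α : Type} [Fintype ι] [DecidableEq ι] [Fintype α] [DecidableEq α]
    (f : ι → α → ℝ) :
    ∑ τ : ι → α, ∏ i, f i (τ i) = ∏ i, ∑ a, f i a := by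
  rw [Finset.prod_univ_sum]
  rw [Fintype.piFinset_univ]

lemma sum_sg {ι : Type} [Fintype ι] [DecidableEq ι] (n : ι → ℕ) :
    ∑ τ : ι → Bool, ∏ i, (sg (τ i))^(n i)
      = if (∀ i, Even (n i)) then 2^(Fintype.card ι) else 0 := by
  rw [sum_prod_fun (fun i a => (sg a)^(n i))]
  by_cases h : ∀ i, Even (n i)
  · rw [if_pos h]
    have : ∀ i : ι, (∑ a : Bool, (sg a)^(n i)) = 2 := by
      intro i; simp [sg_pow, h i, sg, Fintype.sum_bool]
    rw [Finset.prod_congr rfl (fun i _ => this i), Finset.prod_const, Finset.card_univ]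

  · rw [if_neg h]
    push_neg at h
    obtain ⟨i, hi⟩ := h
    refine Finset.prod_eq_zero (Finset.mem_univ i) ?_
    rw [Nat.not_even_iff_odd] at hi
    simp [sg_pow, Nat.not_even_iff_odd.mpr hi, sg, Fintype.sum_bool, hi.neg_one_pow]


section Deg
variable {V E : Type} [Fintype V] [DecidableEq V] [Fintype E] (s t : E → V)

/-- degree of `v` in the sub(multi)graph with edge set `A` -/
def dg (A : Finset E) (v : V) : ℕ :=
  ∑ e ∈ A, ((if s e = v then 1 else 0) + (if t e = v then 1 else 0))

/-- indicator of membership in `F` -/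
def indF {V : Type} (F : Finset V) (v : V) : ℕ := if v ∈ F then 1 else 0

/-- `A` has source set `F` : every vertex has even (`F`-indicator + degree). -/
def bd (F : Finset V) (A : Finset E) : Prop := ∀ v, Even (indF F v + dg s t A v)

lemma dg_union_inter (A B : Finset E) (v : V) :
    dg s t (A ∪ B) v + dg s t (A ∩ B) v = dg s t A v + dg s t B v := by
  simpa [dg] using Finset.sum_union_inter (s₁ := A) (s₂ := B)
    (f := fun e => ((if s e = v then 1 else 0) + (if t e = v then 1 else 0)))

lemma dg_symmDiff_parity (A B : Finset E) (v : V) :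
    ((dg s t (A ∆ B) v : ZMod 2)) = (dg s t A v : ZMod 2) + (dg s t B v : ZMod 2) := by
  have h1 : dg s t (A ∆ B) v + dg s t (A ∩ B) v = dg s t (A ∪ B) v := by
    have hd : Disjoint (A ∆ B) (A ∩ B) := by
      simp only [Finset.disjoint_left, Finset.mem_symmDiff, Finset.mem_inter]
      tauto
    have hu : (A ∆ B) ∪ (A ∩ B) = A ∪ B := by
      ext x; simp only [Finset.mem_union, Finset.mem_symmDiff, Finset.mem_inter]; tauto
    rw [← hu]
    simpa [dg] using (Finset.sum_union hd (f := fun e =>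
      ((if s e = v then 1 else 0) + (if t e = v then 1 else 0)))).symm
  have h2 := dg_union_inter s t A B v
  have : dg s t (A ∆ B) v + 2 * dg s t (A ∩ B) v = dg s t A v + dg s t B v := by omega
  have := congrArg (fun n : ℕ => (n : ZMod 2)) this
  push_cast at this
  have h2' : (2 : ZMod 2) = 0 := by decide
  rw [h2'] at this
  simpa using this

lemma even_iff_zmod (n : ℕ) : Even n ↔ (n : ZMod 2) = 0 := by
  rw [even_iff_two_dvd]
  exact (ZMod.natCast_eq_zero_iff n 2).symm

lemma bd_symmDiff {F G H : Finset V} {A B : Finset E}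
    (hFG : ∀ v, (indF F v : ZMod 2) + (indF G v : ZMod 2) = (indF H v : ZMod 2))
    (hA : bd s t F A) (hB : bd s t G B) : bd s t H (A ∆ B) := by
  intro v
  rw [even_iff_zmod]
  push_cast
  rw [dg_symmDiff_parity]
  have h1 := (even_iff_zmod _).mp (hA v)
  have h2 := (even_iff_zmod _).mp (hB v)
  push_cast at h1 h2
  have := hFG v
  linear_combination h1 + h2 - this

lemma card_symmDiff_add (C B : Finset E) :
    (C ∆ B).card + B.card = C.card + 2 * (B \ C).card := by
  have h1 : (C ∆ B) = (C \ B) ∪ (B \ C) := by ext x; simp only [Finset.mem_symmDiff, Finset.mem_union, Finset.mem_sdiff]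
  have hd : Disjoint (C \ B) (B \ C) := by
    simp only [Finset.disjoint_left, Finset.mem_sdiff]; tauto
  have h2 : (C ∆ B).card = (C \ B).card + (B \ C).card := by
    rw [h1, Finset.card_union_of_disjoint hd]
  have h3 : (C \ B).card + (C ∩ B).card = C.card := by
    rw [← Finset.card_union_of_disjoint (Finset.sdiff_disjoint.mono_right Finset.inter_subset_right)]
    congr 1
    ext x; simp only [Finset.mem_union, Finset.mem_sdiff, Finset.mem_inter]; tauto
  have h4 : (B \ C).card + (C ∩ B).card = B.card := by
    rw [← Finset.card_union_of_disjoint (Finset.sdiff_disjoint.mono_right Finset.inter_subset_left)]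
    congr 1
    ext x; simp only [Finset.mem_union, Finset.mem_sdiff, Finset.mem_inter]; tauto
  omega

lemma symmDiff_sdiff_of_subset {B D C : Finset E} (hDC : D ⊆ C) :
    (B ∆ D) \ C = B \ C := by
  ext x
  simp only [Finset.mem_sdiff, Finset.mem_symmDiff]
  have := @hDC x
  tauto

end Deg


noncomputable section Compat
set_option linter.unusedSectionVars false
variable {V E : Type} [Fintype V] [DecidableEq V] [Fintype E] (s t : E → V)

def Compat (ω : E → Bool) (σ : V → Bool) : Prop := ∀ e, ω e = true → σ (s e) = σ (t e)

lemma compat_const (hloop : ∀ e, s e ≠ t e) {ω : E → Bool} {σ : V → Bool}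
    (h : Compat s t ω σ) {a b : V}
    (hr : (openGraph s t fun e => ω e = true).Reachable a b) : σ a = σ b := by
  obtain ⟨w⟩ := hr
  induction w with
  | nil => rfl
  | cons hadj w ih =>
    rename_i u u' v
    refine Eq.trans ?_ ih
    rw [openGraph, SimpleGraph.fromRel_adj] at hadj
    rcases hadj.2 with ⟨e, he, h1, h2⟩ | ⟨e, he, h1, h2⟩
    · rw [← h1, ← h2]; exact h e he
    · rw [← h1, ← h2]; exact (h e he).symm

lemma compat_of_comp (hloop : ∀ e, s e ≠ t e) (ω : E → Bool)
    (τ : (openGraph s t fun e => ω e = true).ConnectedComponent → Bool) :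
    Compat s t ω
      (fun v => τ ((openGraph s t fun e => ω e = true).connectedComponentMk v)) := by
  intro e he
  have hadj : (openGraph s t fun e => ω e = true).Adj (s e) (t e) := by
    rw [openGraph, SimpleGraph.fromRel_adj]
    exact ⟨hloop e, Or.inl ⟨e, he, rfl, rfl⟩⟩
  simp only []
  rw [SimpleGraph.ConnectedComponent.connectedComponentMk_eq_of_adj hadj]

lemma sum_compat (hloop : ∀ e, s e ≠ t e) (ω : E → Bool)
    [Fintype ((openGraph s t fun e => ω e = true).ConnectedComponent)]
    (g : (V → Bool) → ℝ) :
    ∑ σ : V → Bool, (if Compat s t ω σ then g σ else 0)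
      = ∑ τ : (openGraph s t fun e => ω e = true).ConnectedComponent → Bool,
          g (fun v => τ ((openGraph s t fun e => ω e = true).connectedComponentMk v)) := by
  rw [← Finset.sum_filter]
  have hG : True := trivial
  refine Finset.sum_nbij' (i := fun σ => fun K : (openGraph s t fun e => ω e = true).ConnectedComponent => σ K.out)
    (j := fun τ => fun v => τ ((openGraph s t fun e => ω e = true).connectedComponentMk v)) ?_ ?_ ?_ ?_ ?_
  · intro σ _; exact Finset.mem_univ _
  · intro τ _
    simp only [Finset.mem_filter, Finset.mem_univ, true_and]
    exact compat_of_comp s t hloop ω τ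
  · intro σ hσ
    simp only [Finset.mem_filter, Finset.mem_univ, true_and] at hσ
    funext v
    refine compat_const s t hloop hσ ?_
    have : (openGraph s t fun e => ω e = true).connectedComponentMk ((openGraph s t fun e => ω e = true).connectedComponentMk v).out
        = (openGraph s t fun e => ω e = true).connectedComponentMk v := ((openGraph s t fun e => ω e = true).connectedComponentMk v).out_eq
    exact SimpleGraph.ConnectedComponent.exact this
  · intro τ _
    funext K
    exact congrArg τ K.out_eq
  · intro σ hσ
    simp only [Finset.mem_filter, Finset.mem_univ, true_and] at hσ
    congr 1
    funext v
    refine (compat_const s t hloop hσ ?_).symm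
    exact SimpleGraph.ConnectedComponent.exact ((openGraph s t fun e => ω e = true).connectedComponentMk v).out_eq

end Compat

section CompatEval
set_option linter.unusedSectionVars false
variable {V E : Type} [Fintype V] [DecidableEq V] [Fintype E] (s t : E → V)

lemma prod_sg_ind {ι : Type} [Fintype ι] [DecidableEq ι] (τ : ι → Bool) (a : ι) :
    ∏ i, (sg (τ i))^(if a = i then 1 else 0) = sg (τ a) := by
  have : ∀ i : ι, (sg (τ i))^(if a = i then 1 else 0) = if a = i then sg (τ i) else 1 := by
    intro i; split <;> simp
  rw [Finset.prod_congr rfl (fun i _ => this i), Finset.prod_ite_eq]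
  simp

lemma prod_sg_ind2 {ι : Type} [Fintype ι] [DecidableEq ι] (τ : ι → Bool) (a b : ι) :
    ∏ i, (sg (τ i))^((if a = i then 1 else 0) + (if b = i then 1 else 0))
      = sg (τ a) * sg (τ b) := by
  have : ∀ i : ι, (sg (τ i))^((if a = i then 1 else 0) + (if b = i then 1 else 0))
      = (sg (τ i))^(if a = i then 1 else 0) * (sg (τ i))^(if b = i then 1 else 0) := by
    intro i; rw [pow_add]
  rw [Finset.prod_congr rfl (fun i _ => this i), Finset.prod_mul_distrib,
    prod_sg_ind, prod_sg_ind]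

lemma sum_compat_one (hloop : ∀ e, s e ≠ t e) (ω : E → Bool) :
    ∑ σ : V → Bool, (if Compat s t ω σ then (1:ℝ) else 0)
      = 2 ^ numComp s t (fun e => ω e = true) := by
  letI : Fintype ((openGraph s t fun e => ω e = true).ConnectedComponent) :=
    Fintype.ofFinite _
  rw [sum_compat s t hloop ω (fun _ => (1:ℝ))]
  rw [Finset.sum_const, Finset.card_univ, Fintype.card_fun]
  have : numComp s t (fun e => ω e = true)
      = Fintype.card ((openGraph s t fun e => ω e = true).ConnectedComponent) :=
    Nat.card_eq_fintype_card
  simp [this]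

lemma sum_compat_pair (hloop : ∀ e, s e ≠ t e) (ω : E → Bool) (a b : V) (hab : a ≠ b) :
    ∑ σ : V → Bool, (if Compat s t ω σ then sg (σ a) * sg (σ b) else 0)
      = (if ConnectedInB s t ω a b then 1 else 0)
          * 2 ^ numComp s t (fun e => ω e = true) := by
  letI : Fintype ((openGraph s t fun e => ω e = true).ConnectedComponent) :=
    Fintype.ofFinite _
  rw [sum_compat s t hloop ω (fun σ => sg (σ a) * sg (σ b))]
  have hnum : numComp s t (fun e => ω e = true)
      = Fintype.card ((openGraph s t fun e => ω e = true).ConnectedComponent) :=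
    Nat.card_eq_fintype_card
  have hre : ∀ τ : (openGraph s t fun e => ω e = true).ConnectedComponent → Bool,
      sg (τ ((openGraph s t fun e => ω e = true).connectedComponentMk a))
        * sg (τ ((openGraph s t fun e => ω e = true).connectedComponentMk b))
      = ∏ K, (sg (τ K))^((if (openGraph s t fun e => ω e = true).connectedComponentMk a
            = K then 1 else 0)
          + (if (openGraph s t fun e => ω e = true).connectedComponentMk b
            = K then 1 else 0)) := fun τ => (prod_sg_ind2 τ _ _).symm
  calc ∑ τ : (openGraph s t fun e => ω e = true).ConnectedComponent → Bool,
        sg (τ ((openGraph s t fun e => ω e = true).connectedComponentMk a))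
          * sg (τ ((openGraph s t fun e => ω e = true).connectedComponentMk b))
      = ∑ τ : (openGraph s t fun e => ω e = true).ConnectedComponent → Bool,
          ∏ K, (sg (τ K))^((if (openGraph s t fun e => ω e = true).connectedComponentMk a
              = K then 1 else 0)
            + (if (openGraph s t fun e => ω e = true).connectedComponentMk b
              = K then 1 else 0)) := Finset.sum_congr rfl (fun τ _ => hre τ)
    _ = _ := by
      rw [sum_sg]
      by_cases hc : ConnectedInB s t ω a b
      · have he : (openGraph s t fun e => ω e = true).connectedComponentMk a
            = (openGraph s t fun e => ω e = true).connectedComponentMk b :=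
          SimpleGraph.ConnectedComponent.sound hc
        rw [if_pos, if_pos hc, hnum, one_mul]
        intro K
        rw [he]
        split <;> simp
      · have he : ¬ ((openGraph s t fun e => ω e = true).connectedComponentMk a
            = (openGraph s t fun e => ω e = true).connectedComponentMk b) := by
          intro h; exact hc (SimpleGraph.ConnectedComponent.exact h)
        rw [if_neg, if_neg hc, zero_mul]
        intro hall
        have := hall ((openGraph s t fun e => ω e = true).connectedComponentMk a)
        rw [if_pos rfl, if_neg (fun h => he h.symm)] at this
        simp at this

end CompatEval
section Expansion
set_option linter.unusedSectionVars false
variable {V E : Type} [Fintype V] [DecidableEq V] [Fintype E] (s t : E → V) (p : ℝ)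

def XF (F : Finset V) : ℝ :=
  ∑ A ∈ Finset.univ.filter (fun A => bd s t F A),
    (p/2)^A.card * (1-p/2)^(Fintype.card E - A.card)

lemma sg_mul_eq (x y : Bool) : sg x * sg y = if x = y then 1 else -1 := by
  cases x <;> cases y <;> norm_num [sg]

lemma regroup (A : Finset E) (σ : V → Bool) :
    ∏ e ∈ A, (sg (σ (s e)) * sg (σ (t e))) = ∏ v, (sg (σ v))^(dg s t A v) := by
  have h1 : ∀ e, sg (σ (s e)) * sg (σ (t e))
      = ∏ v, (sg (σ v))^((if s e = v then 1 else 0) + (if t e = v then 1 else 0)) :=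
    fun e => (prod_sg_ind2 σ (s e) (t e)).symm
  rw [Finset.prod_congr rfl (fun e _ => h1 e), Finset.prod_comm]
  refine Finset.prod_congr rfl fun v _ => ?_
  rw [Finset.prod_pow_eq_pow_sum]
  rfl

lemma expansion (F : Finset V) :
    ∑ σ : V → Bool, (∏ v, (sg (σ v))^(indF F v))
        * ∏ e, ((1-p) + p * (if σ (s e) = σ (t e) then 1 else 0))
      = 2^(Fintype.card V) * XF s t p F := by
  have hedge : ∀ (σ : V → Bool) (e : E),
      (1-p) + p * (if σ (s e) = σ (t e) then 1 else 0)
        = (p/2) * (sg (σ (s e)) * sg (σ (t e))) + (1-p/2) := by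
    intro σ e
    rw [sg_mul_eq]
    split <;> ring
  have hexp : ∀ σ : V → Bool,
      ∏ e, ((1-p) + p * (if σ (s e) = σ (t e) then 1 else 0))
        = ∑ A : Finset E, ((p/2)^A.card * (1-p/2)^(Fintype.card E - A.card))
            * ∏ e ∈ A, (sg (σ (s e)) * sg (σ (t e))) := by
    intro σ
    rw [Finset.prod_congr rfl (fun e _ => hedge σ e), Finset.prod_add]
    rw [← (Finset.sum_subset (Finset.subset_univ Finset.univ.powerset) ?_)]
    swap
    · intro A _ hA
      exact absurd (Finset.mem_powerset.mpr (Finset.subset_univ A)) hA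
    refine Finset.sum_congr rfl fun A _ => ?_
    rw [Finset.prod_mul_distrib, Finset.prod_const, Finset.prod_const,
      Finset.card_sdiff_of_subset (Finset.subset_univ A), Finset.card_univ]
    ring
  calc ∑ σ : V → Bool, (∏ v, (sg (σ v))^(indF F v))
        * ∏ e, ((1-p) + p * (if σ (s e) = σ (t e) then 1 else 0))
      = ∑ σ : V → Bool, ∑ A : Finset E,
          ((p/2)^A.card * (1-p/2)^(Fintype.card E - A.card))
            * ∏ v, (sg (σ v))^(indF F v + dg s t A v) := by
        refine Finset.sum_congr rfl fun σ _ => ?_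
        rw [hexp σ, Finset.mul_sum]
        refine Finset.sum_congr rfl fun A _ => ?_
        rw [regroup]
        have : ∏ v, (sg (σ v))^(indF F v + dg s t A v)
            = (∏ v, (sg (σ v))^(indF F v)) * ∏ v, (sg (σ v))^(dg s t A v) := by
          rw [← Finset.prod_mul_distrib]
          exact Finset.prod_congr rfl fun v _ => pow_add _ _ _
        rw [this]
        ring
    _ = ∑ A : Finset E, ((p/2)^A.card * (1-p/2)^(Fintype.card E - A.card))
          * ∑ σ : V → Bool, ∏ v, (sg (σ v))^(indF F v + dg s t A v) := by
        rw [Finset.sum_comm]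
        exact Finset.sum_congr rfl fun A _ => (Finset.mul_sum _ _ _).symm
    _ = 2^(Fintype.card V) * XF s t p F := by
        rw [XF, Finset.mul_sum, ← Finset.sum_filter_add_sum_filter_not Finset.univ
          (fun A => bd s t F A)]
        have h2 : ∀ A ∈ Finset.univ.filter (fun A => ¬ bd s t F A),
            ((p/2)^A.card * (1-p/2)^(Fintype.card E - A.card))
              * ∑ σ : V → Bool, ∏ v, (sg (σ v))^(indF F v + dg s t A v) = 0 := by
          intro A hA
          rw [Finset.mem_filter] at hA
          have hb := hA.2
          unfold bd at hb
          rw [sum_sg, if_neg hb, mul_zero]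
        rw [Finset.sum_congr rfl h2, Finset.sum_const, smul_zero, add_zero]
        refine Finset.sum_congr rfl fun A hA => ?_
        rw [Finset.mem_filter] at hA
        have hb := hA.2
        unfold bd at hb
        rw [sum_sg, if_pos hb]
        ring

lemma indF_pair {a b v : V} (hab : a ≠ b) :
    indF ({a, b} : Finset V) v = (if a = v then 1 else 0) + (if b = v then 1 else 0) := by
  by_cases hva : v = a <;> by_cases hvb : v = b <;>
    simp_all [indF, Finset.mem_insert, Finset.mem_singleton, eq_comm]

lemma prod_compat_ind (ω : E → Bool) (σ : V → Bool) :
    (if Compat s t ω σ then (1:ℝ) else 0)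
      = ∏ e, (if ω e = true then (if σ (s e) = σ (t e) then (1:ℝ) else 0) else 1) := by
  by_cases h : Compat s t ω σ
  · rw [if_pos h]
    refine (Finset.prod_eq_one fun e _ => ?_).symm
    by_cases he : ω e = true
    · rw [if_pos he, if_pos (h e he)]
    · rw [if_neg he]
  · rw [if_neg h]
    rw [Compat] at h
    push_neg at h
    obtain ⟨e, he, hne⟩ := h
    refine (Finset.prod_eq_zero (Finset.mem_univ e) ?_).symm
    rw [if_pos he, if_neg hne]

lemma sum_perc_compat (σ : V → Bool) :
    ∑ ω : E → Bool, percWt (fun _ => p) ω * (if Compat s t ω σ then (1:ℝ) else 0)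
      = ∏ e, ((1-p) + p * (if σ (s e) = σ (t e) then 1 else 0)) := by
  have h1 : ∀ ω : E → Bool, percWt (fun _ => p) ω * (if Compat s t ω σ then (1:ℝ) else 0)
      = ∏ e, (if ω e = true then p * (if σ (s e) = σ (t e) then (1:ℝ) else 0) else (1-p)) := by
    intro ω
    rw [prod_compat_ind, percWt, ← Finset.prod_mul_distrib]
    refine Finset.prod_congr rfl fun e _ => ?_
    by_cases he : ω e = true
    · simp only [he, if_true]
    · simp only [he, if_false]
      have : ω e = false := by simpa using he
      simp [this, mul_one]
  rw [Finset.sum_congr rfl fun ω _ => h1 ω,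
    sum_prod_fun (fun e b => if b = true then p * (if σ (s e) = σ (t e) then (1:ℝ) else 0) else (1-p))]
  refine Finset.prod_congr rfl fun e _ => ?_
  rw [Fintype.sum_bool]
  rw [if_pos rfl, if_neg (by simp : ¬ (false = true))]
  split <;> ring

lemma rc_Z (hloop : ∀ e, s e ≠ t e) :
    ∑ ω : E → Bool, rcWt s t (fun _ => p) 2 ω = 2^(Fintype.card V) * XF s t p ∅ := by
  have h1 : ∀ ω : E → Bool, rcWt s t (fun _ => p) 2 ω
      = percWt (fun _ => p) ω * ∑ σ : V → Bool, (if Compat s t ω σ then (1:ℝ) else 0) := by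
    intro ω
    rw [sum_compat_one s t hloop ω, rcWt]
  rw [Finset.sum_congr rfl fun ω _ => h1 ω]
  have h2 : ∑ ω : E → Bool, percWt (fun _ => p) ω
        * ∑ σ : V → Bool, (if Compat s t ω σ then (1:ℝ) else 0)
      = ∑ σ : V → Bool, ∑ ω : E → Bool,
          percWt (fun _ => p) ω * (if Compat s t ω σ then (1:ℝ) else 0) := by
    rw [Finset.sum_comm]
    exact Finset.sum_congr rfl fun ω _ => Finset.mul_sum _ _ _
  rw [h2, Finset.sum_congr rfl fun σ _ => sum_perc_compat s t p σ, ← expansion s t p ∅]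
  refine Finset.sum_congr rfl fun σ _ => ?_
  have : ∀ v : V, (sg (σ v))^(indF (∅ : Finset V) v) = 1 := by
    intro v; simp [indF]
  rw [Finset.prod_congr rfl fun v _ => this v, Finset.prod_const_one, one_mul]

lemma rc_num (hloop : ∀ e, s e ≠ t e) (a b : V) (hab : a ≠ b) :
    ∑ ω : E → Bool, (if ConnectedInB s t ω a b then rcWt s t (fun _ => p) 2 ω else 0)
      = 2^(Fintype.card V) * XF s t p {a, b} := by
  have h1 : ∀ ω : E → Bool, (if ConnectedInB s t ω a b then rcWt s t (fun _ => p) 2 ω else 0)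
      = percWt (fun _ => p) ω
          * ∑ σ : V → Bool, (if Compat s t ω σ then sg (σ a) * sg (σ b) else 0) := by
    intro ω
    rw [sum_compat_pair s t hloop ω a b hab, rcWt]
    split <;> ring
  rw [Finset.sum_congr rfl fun ω _ => h1 ω]
  have h2 : ∑ ω : E → Bool, percWt (fun _ => p) ω
        * ∑ σ : V → Bool, (if Compat s t ω σ then sg (σ a) * sg (σ b) else 0)
      = ∑ σ : V → Bool, (sg (σ a) * sg (σ b)) * ∑ ω : E → Bool,
          percWt (fun _ => p) ω * (if Compat s t ω σ then (1:ℝ) else 0) := by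
    rw [Finset.sum_congr rfl fun ω (_ : ω ∈ Finset.univ) =>
      Finset.mul_sum Finset.univ (fun σ => if Compat s t ω σ then sg (σ a) * sg (σ b) else 0)
        (percWt (fun _ => p) ω), Finset.sum_comm]
    refine Finset.sum_congr rfl fun σ _ => ?_
    rw [Finset.mul_sum]
    refine Finset.sum_congr rfl fun ω _ => ?_
    split <;> ring
  rw [h2, Finset.sum_congr rfl fun σ (_ : σ ∈ Finset.univ) => congrArg
      (fun r => (sg (σ a) * sg (σ b)) * r) (sum_perc_compat s t p σ),
    ← expansion s t p {a, b}]
  refine Finset.sum_congr rfl fun σ _ => ?_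
  congr 1
  rw [Finset.prod_congr rfl fun v (_ : v ∈ Finset.univ) =>
    congrArg (fun n => (sg (σ v))^n) (indF_pair hab (v := v)), prod_sg_ind2]

end Expansion
section Switching
set_option linter.unusedSectionVars false
variable {V E : Type} [Fintype V] [DecidableEq V] [Fintype E] (s t : E → V)

lemma walk_edge_parity {W' : Type} [DecidableEq W'] {G : SimpleGraph W'} {u v : W'} (w : G.Walk u v) (a : W') :
    (w.edges.countP (fun q => decide (a ∈ q))) % 2
      = ((if a = u then 1 else 0) + (if a = v then 1 else 0)) % 2 := by
  induction w with
  | nil =>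
    simp only [SimpleGraph.Walk.edges_nil, List.countP_nil]
    split <;> rfl
  | cons hadj w ih =>
    rename_i c d f
    rw [SimpleGraph.Walk.edges_cons, List.countP_cons]
    have hne : c ≠ d := hadj.ne
    have hmem : (a ∈ s(c, d)) ↔ (a = c ∨ a = d) := Sym2.mem_iff
    by_cases hac : a = c <;> by_cases had : a = d <;>
      simp only [hac, had, hmem, decide_eq_true_eq] <;> simp_all <;> omega

lemma countP_toFinset {α : Type} [DecidableEq α] {l : List α} (hl : l.Nodup) (pb : α → Bool) :
    ∑ q ∈ l.toFinset, (if pb q = true then 1 else 0) = l.countP pb := by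
  induction l with
  | nil => simp
  | cons a l ih =>
    rw [List.nodup_cons] at hl
    rw [List.toFinset_cons, Finset.sum_insert (by simpa using hl.1), List.countP_cons, ih hl.2]
    split <;> omega

lemma reach_of_bd (hloop : ∀ e, s e ≠ t e) {C : Finset E} {x z : V} (hxz : x ≠ z)
    (hC : bd s t {x, z} C) : (openGraph s t (fun e => e ∈ C)).Reachable x z := by
  by_contra hreach
  set K := Finset.univ.filter (fun v => (openGraph s t (fun e => e ∈ C)).Reachable x v) with hK
  have hxK : x ∈ K := by
    rw [hK, Finset.mem_filter]
    exact ⟨Finset.mem_univ _, SimpleGraph.Reachable.refl x⟩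
  have hzK : z ∉ K := by
    rw [hK, Finset.mem_filter]
    rintro ⟨-, h⟩
    exact hreach h
  have hKe : ∀ e ∈ C, ((s e ∈ K) ↔ (t e ∈ K)) := by
    intro e he
    have hadj : (openGraph s t (fun e => e ∈ C)).Adj (s e) (t e) := by
      rw [openGraph, SimpleGraph.fromRel_adj]
      exact ⟨hloop e, Or.inl ⟨e, he, rfl, rfl⟩⟩
    rw [hK]
    simp only [Finset.mem_filter, Finset.mem_univ, true_and]
    exact ⟨fun h => h.trans hadj.reachable, fun h => h.trans hadj.symm.reachable⟩
  have hsum : ∑ v ∈ K, (dg s t C v : ZMod 2)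
      = ∑ e ∈ C, ((if s e ∈ K then 1 else 0) + (if t e ∈ K then 1 else 0) : ZMod 2) := by
    unfold dg
    push_cast
    rw [Finset.sum_comm]
    refine Finset.sum_congr rfl fun e _ => ?_
    rw [Finset.sum_add_distrib]
    congr 1
    · rw [Finset.sum_ite_eq K (s e) (fun _ => (1 : ZMod 2))]
    · rw [Finset.sum_ite_eq K (t e) (fun _ => (1 : ZMod 2))]
  have hsum0 : ∑ v ∈ K, (dg s t C v : ZMod 2) = 0 := by
    rw [hsum]
    refine Finset.sum_eq_zero fun e he => ?_
    by_cases h : s e ∈ K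
    · rw [if_pos h, if_pos ((hKe e he).mp h)]
      decide
    · rw [if_neg h, if_neg (fun h' => h ((hKe e he).mpr h'))]
      decide
  have hdg : ∀ v : V, (dg s t C v : ZMod 2) = (indF ({x, z} : Finset V) v : ZMod 2) := by
    intro v
    have h := (even_iff_zmod _).mp (hC v)
    push_cast at h
    have hneg : -(indF ({x, z} : Finset V) v : ZMod 2) = (indF ({x, z} : Finset V) v : ZMod 2) :=
      CharTwo.neg_eq _
    linear_combination h + hneg
  rw [Finset.sum_congr rfl fun v _ => hdg v] at hsum0
  have hsum1 : ∑ v ∈ K, ((indF ({x, z} : Finset V) v : ZMod 2))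
      = (if x ∈ K then 1 else 0) + (if z ∈ K then 1 else 0) := by
    have hcast : ∀ v : V, ((indF ({x, z} : Finset V) v : ZMod 2))
        = (if x = v then (1 : ZMod 2) else 0) + (if z = v then 1 else 0) := by
      intro v
      by_cases h1 : x = v
      · by_cases h2 : z = v
        · exact absurd (h1.trans h2.symm) hxz
        · simp [indF, Finset.mem_insert, Finset.mem_singleton, eq_comm, h1, h2]
      · by_cases h2 : z = v <;>
          simp [indF, Finset.mem_insert, Finset.mem_singleton, eq_comm, h1, h2]
    rw [Finset.sum_congr rfl fun v (_ : v ∈ K) => hcast v]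
    rw [Finset.sum_add_distrib]
    congr 1
    · rw [Finset.sum_ite_eq K x (fun _ => (1 : ZMod 2))]
    · rw [Finset.sum_ite_eq K z (fun _ => (1 : ZMod 2))]
  rw [hsum1, if_pos hxK, if_neg hzK, add_zero] at hsum0
  exact one_ne_zero hsum0

lemma exists_D_of_walk (hloop : ∀ e, s e ≠ t e) {C : Finset E} {y z : V} (hyz : y ≠ z)
    (Q : (openGraph s t (fun e => e ∈ C)).Walk y z) (hQ : Q.IsPath) :
    ∃ D : Finset E, D ⊆ C ∧ bd s t {y, z} D := by
  have hQE : ∀ q ∈ Q.edges.toFinset, ∃ e, e ∈ C ∧ s(s e, t e) = q := by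
    intro q hq
    rw [List.mem_toFinset] at hq
    have hq' := Q.edges_subset_edgeSet hq
    induction q with
    | _ a b =>
      rw [SimpleGraph.mem_edgeSet, openGraph, SimpleGraph.fromRel_adj] at hq'
      rcases hq'.2 with ⟨e, he, h1, h2⟩ | ⟨e, he, h1, h2⟩
      · exact ⟨e, he, by rw [h1, h2]⟩
      · exact ⟨e, he, by rw [h1, h2]; exact Sym2.eq_swap⟩
  set ch : {q // q ∈ Q.edges.toFinset} → E := fun q => (hQE q.1 q.2).choose with hch
  have hchC : ∀ q, ch q ∈ C := fun q => (hQE q.1 q.2).choose_spec.1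
  have hchq : ∀ q, s(s (ch q), t (ch q)) = q.1 := fun q => (hQE q.1 q.2).choose_spec.2
  have hinj : Function.Injective ch := by
    intro q1 q2 h
    have := (hchq q1).symm.trans (congrArg (fun e => s(s e, t e)) h) |>.trans (hchq q2)
    exact Subtype.ext this
  set D : Finset E := Finset.image ch Finset.univ with hD
  refine ⟨D, ?_, ?_⟩
  · intro e he
    rw [hD, Finset.mem_image] at he
    obtain ⟨q, _, rfl⟩ := he
    exact hchC q
  · intro v
    have hdg : dg s t D v = Q.edges.countP (fun q => decide (v ∈ q)) := by
      rw [hD]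
      unfold dg
      rw [Finset.sum_image (fun q1 _ q2 _ h => hinj h)]
      have hterm : ∀ q : {q // q ∈ Q.edges.toFinset},
          ((if s (ch q) = v then 1 else 0) + (if t (ch q) = v then 1 else 0))
            = if v ∈ q.1 then 1 else 0 := by
        intro q
        have hne := hloop (ch q)
        have hmem : v ∈ q.1 ↔ v = s (ch q) ∨ v = t (ch q) := by
          rw [← hchq q]; exact Sym2.mem_iff
        by_cases h1 : s (ch q) = v <;> by_cases h2 : t (ch q) = v
        · exact absurd (h1.trans h2.symm) hne
        · rw [if_pos h1, if_neg h2, if_pos (hmem.mpr (Or.inl h1.symm))]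
        · rw [if_neg h1, if_pos h2, if_pos (hmem.mpr (Or.inr h2.symm))]
        · rw [if_neg h1, if_neg h2, if_neg]
          rw [hmem]
          push_neg
          exact ⟨fun h => h1 h.symm, fun h => h2 h.symm⟩
      rw [Finset.sum_congr rfl fun q _ => hterm q]
      rw [← countP_toFinset hQ.edges_nodup (fun q => decide (v ∈ q))]
      rw [← Finset.attach_eq_univ,
        Finset.sum_attach Q.edges.toFinset (fun q => if v ∈ q then 1 else 0)]
      exact Finset.sum_congr rfl fun q _ => by
        by_cases h : v ∈ q <;> simp [h]
    have hpar := walk_edge_parity Q v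
    rw [← hdg] at hpar
    have hind : indF ({y, z} : Finset V) v = (if v = y then 1 else 0) + (if v = z then 1 else 0) := by
      by_cases h1 : v = y
      · by_cases h2 : v = z
        · exact absurd (h1.symm.trans h2) hyz
        · simp [indF, Finset.mem_insert, Finset.mem_singleton, h1, h2, hyz]
      · by_cases h2 : v = z <;>
          simp [indF, Finset.mem_insert, Finset.mem_singleton, h1, h2, hyz, hyz.symm]
    rw [Nat.even_iff]
    rw [hind]
    omega

lemma exists_yD (hloop : ∀ e, s e ≠ t e) {C : Finset E} {x z : V} (hxz : x ≠ z)
    (W : Finset V) (hzW : z ∉ W)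
    (hsep : ∀ w : (openGraph s t fun _ => True).Walk x z, w.IsPath →
      ∃ y ∈ W, y ∈ w.support)
    (hC : bd s t {x, z} C) :
    ∃ y ∈ W, ∃ D : Finset E, D ⊆ C ∧ bd s t {y, z} D := by
  obtain ⟨w⟩ := reach_of_bd s t hloop hxz hC
  have hP : w.bypass.IsPath := SimpleGraph.Walk.bypass_isPath w
  have hsub : ∀ q ∈ w.bypass.edges, q ∈ (openGraph s t fun _ => True).edgeSet := by
    intro q hq
    have hq' := w.bypass.edges_subset_edgeSet hq
    have hle : (openGraph s t (fun e => e ∈ C)) ≤ (openGraph s t fun _ => True) := by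
      intro a b h
      rw [openGraph, SimpleGraph.fromRel_adj] at h ⊢
      refine ⟨h.1, h.2.imp ?_ ?_⟩ <;> rintro ⟨e, -, h1, h2⟩ <;> exact ⟨e, trivial, h1, h2⟩
    exact SimpleGraph.edgeSet_mono hle hq'
  obtain ⟨y, hyW, hy⟩ := hsep (w.bypass.transfer _ hsub) (hP.transfer hsub)
  rw [SimpleGraph.Walk.support_transfer] at hy
  have hyz : y ≠ z := fun h => hzW (h ▸ hyW)
  obtain ⟨D, hDC, hDbd⟩ := exists_D_of_walk s t hloop hyz (w.bypass.dropUntil y hy)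
    (hP.dropUntil hy)
  exact ⟨y, hyW, D, hDC, hDbd⟩

lemma ind_xor {a b c : V} (hab : a ≠ b) (hbc : b ≠ c) (hac : a ≠ c) (v : V) :
    (indF ({a, c} : Finset V) v : ZMod 2) + (indF ({b, c} : Finset V) v : ZMod 2)
      = (indF ({a, b} : Finset V) v : ZMod 2) := by
  by_cases h1 : v = a <;> by_cases h2 : v = b <;> by_cases h3 : v = c <;>
    subst_vars <;>
    simp_all [indF, Finset.mem_insert, Finset.mem_singleton] <;>
    decide

lemma ind_zero (v : V) : (indF (∅ : Finset V) v : ZMod 2) = 0 := by simp [indF]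

lemma ind_self_add {F : Finset V} (v : V) :
    (indF F v : ZMod 2) + (indF F v : ZMod 2) = 0 := by
  have : (2 : ZMod 2) = 0 := by decide
  ring_nf
  rw [show ((indF F v : ZMod 2) * 2) = (indF F v : ZMod 2) * 2 from rfl]
  rw [this, mul_zero]

lemma sum_bd_reindex {F G H : Finset V} (B : Finset E) (hB : bd s t G B)
    (h1 : ∀ v, (indF F v : ZMod 2) + (indF G v : ZMod 2) = (indF H v : ZMod 2))
    (h2 : ∀ v, (indF H v : ZMod 2) + (indF G v : ZMod 2) = (indF F v : ZMod 2))
    (f : Finset E → ℝ) :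
    ∑ A ∈ Finset.univ.filter (fun A => bd s t H A), f A
      = ∑ C ∈ Finset.univ.filter (fun C => bd s t F C), f (C ∆ B) := by
  refine Finset.sum_nbij' (i := fun A => A ∆ B) (j := fun C => C ∆ B) ?_ ?_ ?_ ?_ ?_
  · intro A hA
    rw [Finset.mem_filter] at hA ⊢
    exact ⟨Finset.mem_univ _, bd_symmDiff s t h2 hA.2 hB⟩
  · intro C hC
    rw [Finset.mem_filter] at hC ⊢
    exact ⟨Finset.mem_univ _, bd_symmDiff s t h1 hC.2 hB⟩
  · intro A _
    exact symmDiff_symmDiff_cancel_right B A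
  · intro C _
    exact symmDiff_symmDiff_cancel_right B C
  · intro A _
    show f A = f (A ∆ B ∆ B)
    rw [symmDiff_symmDiff_cancel_right B A]

lemma XF_nonneg (hp0 : 0 ≤ p) (hp1 : p ≤ 1) (F : Finset V) : 0 ≤ XF s t p F := by
  refine Finset.sum_nonneg fun A _ => ?_
  have h1 : (0:ℝ) ≤ p/2 := by linarith
  have h2 : (0:ℝ) ≤ 1 - p/2 := by linarith
  positivity

lemma XF_empty_pos (hp0 : 0 ≤ p) (hp1 : p ≤ 1) : 0 < XF s t p ∅ := by
  refine Finset.sum_pos' (fun A _ => ?_) ⟨∅, ?_, ?_⟩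
  · have h1 : (0:ℝ) ≤ p/2 := by linarith
    have h2 : (0:ℝ) ≤ 1 - p/2 := by linarith
    positivity
  · rw [Finset.mem_filter]
    refine ⟨Finset.mem_univ _, fun v => ?_⟩
    simp [indF, dg]
  · have h2 : (0:ℝ) < 1 - p/2 := by linarith
    simp only [Finset.card_empty, pow_zero, one_mul, Nat.sub_zero]
    positivity

lemma switching (hloop : ∀ e, s e ≠ t e) (hp0 : 0 ≤ p) (hp1 : p ≤ 1)
    (x z : V) (hxz : x ≠ z) (W : Finset V) (hxW : x ∉ W) (hzW : z ∉ W)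
    (hsep : ∀ w : (openGraph s t fun _ => True).Walk x z, w.IsPath →
      ∃ y ∈ W, y ∈ w.support) :
    XF s t p {x, z} * XF s t p ∅
      ≤ ∑ y ∈ W, XF s t p {x, y} * XF s t p {y, z} := by
  set g2 : ℕ → ℝ := fun n => (p/2)^n * (1-p/2)^(2*Fintype.card E - n) with hg2def
  have hg2 : ∀ n, 0 ≤ g2 n := by
    intro n
    have h1 : (0:ℝ) ≤ p/2 := by linarith
    have h2 : (0:ℝ) ≤ 1 - p/2 := by linarith
    positivity
  have hXmul : ∀ F G : Finset V, XF s t p F * XF s t p G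
      = ∑ A ∈ Finset.univ.filter (fun A => bd s t F A),
          ∑ B ∈ Finset.univ.filter (fun B => bd s t G B), g2 (A.card + B.card) := by
    intro F G
    rw [XF, XF, Finset.sum_mul_sum]
    refine Finset.sum_congr rfl fun A _ => Finset.sum_congr rfl fun B _ => ?_
    have hA : A.card ≤ Fintype.card E := by
      rw [← Finset.card_univ]; exact Finset.card_le_card (Finset.subset_univ A)
    have hB : B.card ≤ Fintype.card E := by
      rw [← Finset.card_univ]; exact Finset.card_le_card (Finset.subset_univ B)
    rw [hg2def]
    have he : 2*Fintype.card E - (A.card + B.card)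
        = (Fintype.card E - A.card) + (Fintype.card E - B.card) := by omega
    simp only []
    rw [he, pow_add, pow_add]
    ring
  have hdistinct : ∀ y ∈ W, y ≠ x ∧ y ≠ z := by
    intro y hy
    exact ⟨fun h => hxW (h ▸ hy), fun h => hzW (h ▸ hy)⟩
  calc XF s t p {x, z} * XF s t p ∅
      = ∑ B ∈ Finset.univ.filter (fun B => bd s t (∅ : Finset V) B),
          ∑ A ∈ Finset.univ.filter (fun A => bd s t {x, z} A), g2 (A.card + B.card) := by
        rw [hXmul, Finset.sum_comm]
    _ = ∑ B ∈ Finset.univ.filter (fun B => bd s t (∅ : Finset V) B),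
          ∑ C ∈ Finset.univ.filter (fun C => bd s t {x, z} C), g2 ((C ∆ B).card + B.card) := by
        refine Finset.sum_congr rfl fun B hB => ?_
        rw [Finset.mem_filter] at hB
        exact sum_bd_reindex s t B hB.2
          (fun v => by rw [ind_zero, add_zero])
          (fun v => by rw [ind_zero, add_zero])
          (fun A => g2 (A.card + B.card))
    _ = ∑ C ∈ Finset.univ.filter (fun C => bd s t {x, z} C),
          ∑ B ∈ Finset.univ.filter (fun B => bd s t (∅ : Finset V) B),
            g2 ((C ∆ B).card + B.card) := Finset.sum_comm
    _ ≤ ∑ C ∈ Finset.univ.filter (fun C => bd s t {x, z} C),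
          ∑ y ∈ W, ∑ B ∈ Finset.univ.filter (fun B => bd s t {y, z} B),
            g2 ((C ∆ B).card + B.card) := by
        refine Finset.sum_le_sum fun C hC => ?_
        rw [Finset.mem_filter] at hC
        obtain ⟨y, hyW, D, hDC, hDbd⟩ := exists_yD s t hloop hxz W hzW hsep hC.2
        have hyz : y ≠ z := (hdistinct y hyW).2
        have step : ∑ B ∈ Finset.univ.filter (fun B => bd s t (∅ : Finset V) B),
              g2 ((C ∆ B).card + B.card)
            = ∑ B ∈ Finset.univ.filter (fun B => bd s t ({y, z} : Finset V) B),
              g2 ((C ∆ B).card + B.card) := by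
          rw [sum_bd_reindex s t (F := ({y, z} : Finset V)) (G := ({y, z} : Finset V))
            (H := (∅ : Finset V)) D hDbd
            (fun v => by rw [ind_zero]; exact ind_self_add v)
            (fun v => by rw [ind_zero, zero_add])
            (fun B => g2 ((C ∆ B).card + B.card))]
          refine Finset.sum_congr rfl fun B hB => ?_
          congr 1
          have h1 : (C ∆ (B ∆ D)).card + (B ∆ D).card = C.card + 2 * ((B ∆ D) \ C).card :=
            card_symmDiff_add C (B ∆ D)
          have h2 : (C ∆ B).card + B.card = C.card + 2 * (B \ C).card :=
            card_symmDiff_add C B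
          rw [symmDiff_sdiff_of_subset hDC] at h1
          omega
        rw [step]
        refine Finset.single_le_sum (f := fun y => ∑ B ∈ Finset.univ.filter
          (fun B => bd s t ({y, z} : Finset V) B), g2 ((C ∆ B).card + B.card)) ?_ hyW
        intro y' _
        exact Finset.sum_nonneg fun B _ => hg2 _
    _ = ∑ y ∈ W, ∑ C ∈ Finset.univ.filter (fun C => bd s t {x, z} C),
          ∑ B ∈ Finset.univ.filter (fun B => bd s t ({y, z} : Finset V) B),
            g2 ((C ∆ B).card + B.card) := Finset.sum_comm
    _ = ∑ y ∈ W, XF s t p {x, y} * XF s t p {y, z} := by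
        refine Finset.sum_congr rfl fun y hyW => ?_
        have hyx : y ≠ x := (hdistinct y hyW).1
        have hyz : y ≠ z := (hdistinct y hyW).2
        rw [hXmul]
        have inner : ∀ B ∈ Finset.univ.filter (fun B => bd s t ({y, z} : Finset V) B),
            ∑ A ∈ Finset.univ.filter (fun A => bd s t ({x, y} : Finset V) A),
              g2 (A.card + B.card)
            = ∑ C ∈ Finset.univ.filter (fun C => bd s t {x, z} C),
              g2 ((C ∆ B).card + B.card) := by
          intro B hB
          rw [Finset.mem_filter] at hB
          exact sum_bd_reindex s t B hB.2
            (fun v => ind_xor hyx.symm hyz hxz v)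
            (fun v => by
              rw [show ({y, z} : Finset V) = {z, y} from Finset.pair_comm y z]
              exact ind_xor hxz hyz.symm hyx.symm v)
            (fun A => g2 (A.card + B.card))
        conv_rhs => rw [Finset.sum_comm]
        rw [Finset.sum_congr rfl inner]
        exact Finset.sum_comm

end Switching

theorem simon_inequality_random_cluster'
    (V E : Type) [Fintype V] [DecidableEq V] [Fintype E]
    (s t : E → V) (hloop : ∀ e, s e ≠ t e)
    (p : ℝ) (hp0 : 0 ≤ p) (hp1 : p ≤ 1)
    (x z : V) (hxz : x ≠ z) (W : Finset V) (hxW : x ∉ W) (hzW : z ∉ W)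
    (hsep : ∀ w : (openGraph s t fun _ => True).Walk x z, w.IsPath →
      ∃ y ∈ W, y ∈ w.support) :
    rcProb s t (fun _ => p) 2 (fun ω => ConnectedInB s t ω x z) ≤
      ∑ y ∈ W, rcProb s t (fun _ => p) 2 (fun ω => ConnectedInB s t ω x y) *
        rcProb s t (fun _ => p) 2 (fun ω => ConnectedInB s t ω y z) := by
  have hZ := XF_empty_pos s t (p := p) hp0 hp1
  have hform : ∀ a b : V, a ≠ b →
      rcProb s t (fun _ => p) 2 (fun ω => ConnectedInB s t ω a b)
        = XF s t p {a, b} / XF s t p ∅ := by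
    intro a b hab
    rw [rcProb, rc_num s t p hloop a b hab, rc_Z s t p hloop]
    rw [mul_div_mul_left _ _ (by positivity : ((2:ℝ))^(Fintype.card V) ≠ 0)]
  have hdist : ∀ y ∈ W, y ≠ x ∧ y ≠ z := by
    intro y hy
    exact ⟨fun h => hxW (h ▸ hy), fun h => hzW (h ▸ hy)⟩
  rw [hform x z hxz]
  have hRHS : ∀ y ∈ W,
      rcProb s t (fun _ => p) 2 (fun ω => ConnectedInB s t ω x y) *
        rcProb s t (fun _ => p) 2 (fun ω => ConnectedInB s t ω y z)
      = (XF s t p {x, y} * XF s t p {y, z}) / (XF s t p ∅)^2 := by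
    intro y hy
    rw [hform x y (fun h => (hdist y hy).1 h.symm), hform y z (hdist y hy).2,
      div_mul_div_comm, sq]
  rw [Finset.sum_congr rfl hRHS, ← Finset.sum_div]
  rw [div_le_div_iff₀ hZ (by positivity)]
  have hs := switching s t (p := p) hloop hp0 hp1 x z hxz W hxW hzW hsep
  nlinarith [mul_le_mul_of_nonneg_right hs hZ.le, hZ.le]

end SimonAux


/-- Simon inequality, random-cluster form with `q = 2`: if `W` separates `x` and `z`
then `φ_{p,2}(x ↔ z) ≤ ∑_{y ∈ W} φ_{p,2}(x ↔ y) φ_{p,2}(y ↔ z)`. -/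
theorem simon_inequality_random_cluster
    (V E : Type) [Fintype V] [DecidableEq V] [Fintype E]
    (s t : E → V) (hloop : ∀ e, s e ≠ t e)
    (p : ℝ) (hp0 : 0 ≤ p) (hp1 : p ≤ 1)
    (x z : V) (hxz : x ≠ z) (W : Finset V) (hxW : x ∉ W) (hzW : z ∉ W)
    (hsep : ∀ w : (openGraph s t fun _ => True).Walk x z, w.IsPath →
      ∃ y ∈ W, y ∈ w.support) :
    rcProb s t (fun _ => p) 2 (fun ω => ConnectedInB s t ω x z) ≤
      ∑ y ∈ W, rcProb s t (fun _ => p) 2 (fun ω => ConnectedInB s t ω x y) *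
        rcProb s t (fun _ => p) 2 (fun ω => ConnectedInB s t ω y z) :=
  simon_inequality_random_cluster' V E s t hloop p hp0 hp1 x z hxz W hxW hzW hsep
end

section
/- Fortuin–Kasteleyn correlation–connection theorem. Let G=(V,E) be a finite graph without loops, q ∈ {2,3,…}, β > 0, J=(J_e : e∈E) non-negative reals, and set p_e = 1 − e^{−βJ_e q} for each edge e. Then for all vertices x,y ∈ V, the Potts two-point correlation τ(x,y) = π(σ_x = σ_y) − 1/q satisfies τ(x,y) = (1 − 1/q) · φ_{p,q}(x ↔ y), where φ_{p,q} is the random-cluster measure on {0,1}^E with edge parameters p = (p_e) and cluster weight q. -/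
open scoped BigOperators symmDiff Classical

/-!
Edwards–Sokal coupling. Since `p_e = 1 - e^{-β J_e q}`, each edge factor of the Potts weight is
`e^{β J_e (q - 1)} ((1 - p_e) + p_e δ_e(σ))`; expanding the product over edges writes the Potts
weight as a sum over `ω ∈ {0,1}^E` of the percolation weight of `ω` times the indicator that
`σ` is constant on the clusters of `ω`. Summing over `σ` gives `q^{k(ω)}`, so `Z_P` is a constant
multiple of `Z_RC`; restricting to `σ_x = σ_y` gives `q^{k(ω)}` when `x ↔ y` and `q^{k(ω)-1}`
otherwise, whence `π(σ_x = σ_y) = φ(x ↔ y) + (1 - φ(x ↔ y)) / q`.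
-/

section ConstantOnComponents

variable {V α : Type}

lemma natCard_subtype_eq_mul_natCard {C : Type} {a b : C} (hab : a ≠ b) :
    Nat.card {g : C → α // g a = g b} * Nat.card α = Nat.card (C → α) := by
  rw [← Nat.card_prod]
  refine Nat.card_congr
    { toFun := fun gc => Function.update gc.1.1 b gc.2
      invFun := fun f => (⟨Function.update f b (f a), by simp [hab]⟩, f b)
      left_inv := fun ⟨⟨g, hg⟩, c⟩ => ?_
      right_inv := fun f => by simp }
  ext1
  · ext1; simp [hab, hg]
  · simp

variable [Fintype V] (G : SimpleGraph V)

lemma natCard_reachableSetoid_le_ker :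
    Nat.card {σ : V → α // G.reachableSetoid ≤ Setoid.ker σ}
      = Nat.card α ^ Nat.card G.ConnectedComponent := by
  rw [Nat.card_congr (Setoid.liftEquiv G.reachableSetoid), Nat.card_fun]
  rfl

lemma natCard_reachableSetoid_le_ker_and_eq_mul {x y : V} (hxy : ¬ G.Reachable x y) :
    Nat.card {σ : V → α // G.reachableSetoid ≤ Setoid.ker σ ∧ σ x = σ y} * Nat.card α
      = Nat.card α ^ Nat.card G.ConnectedComponent := by
  have hne : G.connectedComponentMk x ≠ G.connectedComponentMk y :=
    fun h => hxy (SimpleGraph.ConnectedComponent.exact h)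
  rw [Nat.card_congr ((Equiv.subtypeSubtypeEquivSubtypeInter _ _).symm.trans
      (Equiv.subtypeEquiv (Setoid.liftEquiv G.reachableSetoid)
        (q := fun g : G.ConnectedComponent → α =>
          g (G.connectedComponentMk x) = g (G.connectedComponentMk y)) fun σ => Iff.rfl)),
    natCard_subtype_eq_mul_natCard hne, Nat.card_fun]

lemma sum_boole_reachableSetoid_le_ker [DecidableEq V] (q : ℕ) :
    ∑ σ : V → Fin q, (if G.reachableSetoid ≤ Setoid.ker σ then (1 : ℝ) else 0)
      = (q : ℝ) ^ Nat.card G.ConnectedComponent := by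
  rw [Finset.sum_boole, ← Fintype.card_subtype, ← Nat.card_eq_fintype_card,
    natCard_reachableSetoid_le_ker, Nat.card_fin]
  push_cast
  rfl

lemma mul_sum_boole_reachableSetoid_le_ker_and_eq [DecidableEq V] (q : ℕ) (x y : V) :
    (q : ℝ) * ∑ σ : V → Fin q,
        (if G.reachableSetoid ≤ Setoid.ker σ ∧ σ x = σ y then (1 : ℝ) else 0)
      = (q : ℝ) ^ Nat.card G.ConnectedComponent * if G.Reachable x y then (q : ℝ) else 1 := by
  by_cases hxy : G.Reachable x y
  · have hiff : ∀ σ : V → Fin q,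
        G.reachableSetoid ≤ Setoid.ker σ ∧ σ x = σ y ↔ G.reachableSetoid ≤ Setoid.ker σ :=
      fun σ => and_iff_left_of_imp fun h => h hxy
    simp only [hiff, sum_boole_reachableSetoid_le_ker, if_pos hxy, mul_comm]
  · rw [Finset.sum_boole, ← Fintype.card_subtype, ← Nat.card_eq_fintype_card, if_neg hxy,
      mul_one, mul_comm]
    have hcard := natCard_reachableSetoid_le_ker_and_eq_mul (α := Fin q) G hxy
    rw [Nat.card_fin] at hcard
    exact_mod_cast hcard

end ConstantOnComponents

section EdwardsSokal

variable {V E : Type} (s t : E → V)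

lemma openGraph_reachableSetoid_le_ker_iff {α : Type} (pred : E → Prop) (σ : V → α) :
    (openGraph s t pred).reachableSetoid ≤ Setoid.ker σ ↔ ∀ e, pred e → σ (s e) = σ (t e) := by
  refine ⟨fun h e he => ?_, fun h => Setoid.le_def.mpr fun {u v} huv => ?_⟩
  · by_cases hst : s e = t e
    · rw [hst]
    · refine Setoid.ker_def.mp (h (SimpleGraph.Adj.reachable ?_))
      exact (SimpleGraph.fromRel_adj _ _ _).mpr ⟨hst, Or.inl ⟨e, he, rfl, rfl⟩⟩
  · obtain ⟨w⟩ := huv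
    induction w with
    | nil => rfl
    | cons hadj _ ih =>
      refine Setoid.ker_def.mpr (Eq.trans ?_ (Setoid.ker_def.mp ih))
      obtain ⟨-, ⟨e, he, rfl, rfl⟩ | ⟨e, he, rfl, rfl⟩⟩ := (SimpleGraph.fromRel_adj _ _ _).mp hadj
      · exact h e he
      · exact (h e he).symm

lemma sum_bool_pi_prod_ite {R : Type} [CommSemiring R] [Fintype E] (A B : E → R) :
    ∑ ω : E → Bool, ∏ e, (if ω e then A e else B e) = ∏ e, (A e + B e) := by
  rw [← Fintype.prod_sum fun e (b : Bool) => if b then A e else B e]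
  simp

variable [Fintype E] (p : E → ℝ)

noncomputable def edwardsSokalWt {α : Type} (σ : V → α) (ω : E → Bool) : ℝ :=
  ∏ e, if ω e then (if σ (s e) = σ (t e) then p e else 0) else 1 - p e

lemma edwardsSokalWt_eq_percWt_mul {α : Type} (σ : V → α) (ω : E → Bool) :
    edwardsSokalWt s t p σ ω = percWt p ω *
      if (openGraph s t fun e => ω e = true).reachableSetoid ≤ Setoid.ker σ then 1 else 0 := by
  rw [openGraph_reachableSetoid_le_ker_iff, edwardsSokalWt, percWt]
  split_ifs with hcompat
  · rw [mul_one]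
    exact Finset.prod_congr rfl fun e _ => by cases hω : ω e <;> simp [hω, hcompat e]
  · obtain ⟨e, hωe, hne⟩ := not_forall₂.mp hcompat
    rw [mul_zero]
    exact Finset.prod_eq_zero (Finset.mem_univ e) (by simp [hωe, hne])

lemma sum_edwardsSokalWt {α : Type} (σ : V → α) :
    ∑ ω, edwardsSokalWt s t p σ ω = ∏ e, if σ (s e) = σ (t e) then 1 else 1 - p e := by
  simp only [edwardsSokalWt, sum_bool_pi_prod_ite]
  refine Finset.prod_congr rfl fun e _ => ?_
  split_ifs <;> ring

end EdwardsSokal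

section PottsRandomCluster

variable {V E : Type} [Fintype E] (s t : E → V) {q : ℕ} {β : ℝ} {J p : E → ℝ}

lemma pottsWt_eq_mul_sum_edwardsSokalWt (hp : ∀ e, p e = 1 - Real.exp (-(β * J e * q)))
    (σ : V → Fin q) :
    pottsWt s t q β J σ
      = (∏ e, Real.exp (β * J e * (q - 1))) * ∑ ω, edwardsSokalWt s t p σ ω := by
  rw [sum_edwardsSokalWt, ← Finset.prod_mul_distrib, pottsWt, Real.exp_sum]
  refine Finset.prod_congr rfl fun e _ => ?_
  split_ifs
  · simp
  · rw [hp, sub_sub_cancel, ← Real.exp_add]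
    ring_nf

lemma sum_mul_pottsWt [Fintype V] [DecidableEq V]
    (hp : ∀ e, p e = 1 - Real.exp (-(β * J e * q))) (g : (V → Fin q) → ℝ) :
    ∑ σ, g σ * pottsWt s t q β J σ = (∏ e, Real.exp (β * J e * (q - 1))) *
      ∑ ω : E → Bool, percWt p ω * ∑ σ : V → Fin q,
        if (openGraph s t fun e => ω e = true).reachableSetoid ≤ Setoid.ker σ then g σ else 0 := by
  simp only [pottsWt_eq_mul_sum_edwardsSokalWt s t hp, edwardsSokalWt_eq_percWt_mul,
    Finset.mul_sum]
  rw [Finset.sum_comm]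
  refine Finset.sum_congr rfl fun ω _ => Finset.sum_congr rfl fun σ _ => ?_
  split_ifs <;> ring

lemma pottsZ_eq_mul_sum_rcWt [Fintype V] [DecidableEq V]
    (hp : ∀ e, p e = 1 - Real.exp (-(β * J e * q))) :
    pottsZ V s t q β J = (∏ e, Real.exp (β * J e * (q - 1))) * ∑ ω, rcWt s t p q ω := by
  have hsum := sum_mul_pottsWt s t hp 1
  simp only [Pi.one_apply, one_mul, sum_boole_reachableSetoid_le_ker] at hsum
  exact hsum

lemma mul_sum_ite_pottsWt_eq [Fintype V] [DecidableEq V]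
    (hp : ∀ e, p e = 1 - Real.exp (-(β * J e * q))) (x y : V) :
    (q : ℝ) * ∑ σ, (if σ x = σ y then pottsWt s t q β J σ else 0)
      = (∏ e, Real.exp (β * J e * (q - 1))) *
          ∑ ω, rcWt s t p q ω * if ConnectedInB s t ω x y then (q : ℝ) else 1 := by
  have hsum := sum_mul_pottsWt s t hp fun σ => if σ x = σ y then 1 else 0
  simp only [boole_mul, ← ite_and] at hsum
  rw [hsum, mul_left_comm, Finset.mul_sum]
  refine congrArg _ (Finset.sum_congr rfl fun ω _ => ?_)
  rw [mul_left_comm, mul_sum_boole_reachableSetoid_le_ker_and_eq, rcWt, mul_assoc, numComp,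
    ConnectedInB]
  congr

lemma pottsZ_pos [Fintype V] [DecidableEq V] (hq : 0 < q) : 0 < pottsZ V s t q β J := by
  have : Nonempty (Fin q) := Fin.pos_iff_nonempty.mp hq
  exact Finset.sum_pos (fun σ _ => Real.exp_pos _) Finset.univ_nonempty

end PottsRandomCluster

theorem fk_correlation_connection_general
    (V E : Type) [Fintype V] [DecidableEq V] [Fintype E]
    (s t : E → V)
    (q : ℕ) (hq : 2 ≤ q) (β : ℝ)
    (J : E → ℝ)
    (p : E → ℝ) (hp : ∀ e, p e = 1 - Real.exp (-(β * J e * q)))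
    (x y : V) :
    (∑ σ : V → Fin q, if σ x = σ y then pottsWt s t q β J σ else 0) / pottsZ V s t q β J
        - 1 / q
      = (1 - 1 / q) * rcProb s t p (q : ℝ) (fun ω => ConnectedInB s t ω x y) := by
  set c := ∏ e, Real.exp (β * J e * ((q : ℝ) - 1))
  set Z := ∑ ω, rcWt s t p q ω
  set A := ∑ ω, if ConnectedInB s t ω x y then rcWt s t p q ω else 0
  have hZ : pottsZ V s t q β J = c * Z := pottsZ_eq_mul_sum_rcWt s t hp
  have hN := mul_sum_ite_pottsWt_eq s t hp x y
  have hsplit : ∑ ω, rcWt s t p q ω * (if ConnectedInB s t ω x y then (q : ℝ) else 1)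
      = Z + (q - 1) * A := by
    rw [Finset.mul_sum, ← Finset.sum_add_distrib]
    exact Finset.sum_congr rfl fun ω _ => by split_ifs <;> ring
  have hq0 : (q : ℝ) ≠ 0 := Nat.cast_ne_zero.mpr (by omega)
  have hc : c ≠ 0 := (Finset.prod_pos fun e _ => Real.exp_pos _).ne'
  have hZ0 : Z ≠ 0 := right_ne_zero_of_mul (hZ ▸ (pottsZ_pos s t (by omega)).ne')
  change _ = _ * (A / Z)
  rw [hZ]
  rw [hsplit] at hN
  field_simp
  linear_combination hN

/-- Fortuin–Kasteleyn correlation–connection theorem: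
`τ(x,y) = π(σ_x = σ_y) - 1/q = (1 - 1/q) φ_{p,q}(x ↔ y)` with
`p_e = 1 - e^{-β J_e q}`. -/
theorem fk_correlation_connection
    (V E : Type) [Fintype V] [DecidableEq V] [Fintype E]
    (s t : E → V) (hloop : ∀ e, s e ≠ t e)
    (q : ℕ) (hq : 2 ≤ q) (β : ℝ) (hβ : 0 < β)
    (J : E → ℝ) (hJ : ∀ e, 0 ≤ J e)
    (p : E → ℝ) (hp : ∀ e, p e = 1 - Real.exp (-(β * J e * q)))
    (x y : V) :
    (∑ σ : V → Fin q, if σ x = σ y then pottsWt s t q β J σ else 0) / pottsZ V s t q β J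
        - 1 / q
      = (1 - 1 / q) * rcProb s t p (q : ℝ) (fun ω => ConnectedInB s t ω x y) :=
  fk_correlation_connection_general V E s t q hq β J p hp x y
end
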